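/- arXiv:2405.10086 — 5 statements merged into one kernel-verified Lean document; each statement's English description precedes it below -/
import Mathlib

section
/- Let n ≥ 2 be an integer and let P, Q, R be integer polynomials, each irreducible over ℚ and of degree exactly n, which are linearly independent over ℚ. Then the 3(n−1) polynomials T^i·P, T^i·Q, T^i·R for 0 ≤ i ≤ n−2 span the (2n−1)-dimensional ℚ-vector space of polynomials of degree at most 2n−2. -/
open Polynomial Filter

noncomputable section

/-- Height of an integer polynomial: maximum absolute value of its coefficients. -/
def polyHeight (P : Polynomial ℤ) : ℕ :=
  P.support.sup fun i => (P.coeff i).natAbs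

/-- The set of exponents `w` admissible for the uniform exponent `ŵ_n(ξ)`. -/
def uniformExpSet (n : ℕ) (ξ : ℝ) : Set ℝ :=
  {w | ∀ᶠ X : ℝ in atTop, ∃ P : Polynomial ℤ, P.natDegree ≤ n ∧
    (polyHeight P : ℝ) ≤ X ∧ 0 < |Polynomial.aeval ξ P| ∧
    |Polynomial.aeval ξ P| < X ^ (-w)}

/-- The uniform exponent `ŵ_n(ξ)`, as an extended real. -/
def wHat (n : ℕ) (ξ : ℝ) : EReal :=
  sSup ((fun w : ℝ => (w : EReal)) '' uniformExpSet n ξ)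

/-- The set of exponents `w` admissible for the ordinary exponent `w_n(ξ)`. -/
def ordExpSet (n : ℕ) (ξ : ℝ) : Set ℝ :=
  {w | {P : Polynomial ℤ | P.natDegree ≤ n ∧ 0 < |Polynomial.aeval ξ P| ∧
      |Polynomial.aeval ξ P| < (polyHeight P : ℝ) ^ (-w)}.Infinite}

/-- The ordinary exponent `w_n(ξ)`, as an extended real. -/
def wOrd (n : ℕ) (ξ : ℝ) : EReal :=
  sSup ((fun w : ℝ => (w : EReal)) '' ordExpSet n ξ)

/-- `P` (1-indexed: the relevant values are `P 1, P 2, …`) is the sequence of best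
approximation polynomials associated to `(n, ξ)`. -/
structure IsBestApproxSeq (n : ℕ) (ξ : ℝ) (P : ℕ → Polynomial ℤ) : Prop where
  ne_zero : ∀ k, 1 ≤ k → P k ≠ 0
  deg_le : ∀ k, 1 ≤ k → (P k).natDegree ≤ n
  height_lt : ∀ k, 1 ≤ k → polyHeight (P k) < polyHeight (P (k+1))
  eval_lt : ∀ k, 1 ≤ k → |Polynomial.aeval ξ (P (k+1))| < |Polynomial.aeval ξ (P k)|
  isMin : ∀ k, 1 ≤ k → ∀ Q : Polynomial ℤ, Q ≠ 0 → Q.natDegree ≤ n →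
    polyHeight Q ≤ polyHeight (P k) →
    |Polynomial.aeval ξ (P k)| ≤ |Polynomial.aeval ξ Q|
  complete : ∀ Q : Polynomial ℤ, Q ≠ 0 → Q.natDegree ≤ n →
    (∀ R : Polynomial ℤ, R ≠ 0 → R.natDegree ≤ n → polyHeight R ≤ polyHeight Q →
      |Polynomial.aeval ξ Q| ≤ |Polynomial.aeval ξ R|) →
    ∃ k, 1 ≤ k ∧ (Q = P k ∨ Q = -P k)

/-- The image of an integer polynomial in `ℚ[X]`. -/
def ratPoly (P : Polynomial ℤ) : Polynomial ℚ := P.map (Int.castRingHom ℚ)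

/-- `k` is good for the sequence `P`: `P_{k-1}, P_k, P_{k+1}` are `ℚ`-linearly independent. -/
def Good (P : ℕ → Polynomial ℤ) (k : ℕ) : Prop :=
  LinearIndependent ℚ ![ratPoly (P (k-1)), ratPoly (P k), ratPoly (P (k+1))]

/-- `τ_k = log H_k / log H_{k-1}`. -/
def tauk (P : ℕ → Polynomial ℤ) (k : ℕ) : ℝ :=
  Real.log (polyHeight (P k)) / Real.log (polyHeight (P (k-1)))

/-- `μ_k = -log |P_{k-1}(ξ)| / log H_k`. -/
def muk (ξ : ℝ) (P : ℕ → Polynomial ℤ) (k : ℕ) : ℝ :=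
  - Real.log |Polynomial.aeval ξ (P (k-1))| / Real.log (polyHeight (P k))

/-- `v_k = -log |P_k(ξ)| / log H_k`. -/
def vk (ξ : ℝ) (P : ℕ → Polynomial ℤ) (k : ℕ) : ℝ :=
  - Real.log |Polynomial.aeval ξ (P k)| / Real.log (polyHeight (P k))

/-- The set of integers `m ≥ k+1` such that `P_{k-1}, …, P_{m-1}` all lie in the
two-dimensional space spanned by `P_{k-1}` and `P_k`; its greatest element is `ℓ(k)`. -/
def ellSet (P : ℕ → Polynomial ℤ) (k : ℕ) : Set ℕ :=
  {m | k + 1 ≤ m ∧ ∀ j, k - 1 ≤ j → j ≤ m - 1 →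
    ratPoly (P j) ∈ Submodule.span ℚ {ratPoly (P (k-1)), ratPoly (P k)}}

/-- The set `V_k = {P, T·P, …, T^{n-2}·P}` (as rational polynomials). -/
def Vset (n : ℕ) (A : Polynomial ℤ) : Set (Polynomial ℚ) :=
  {q | ∃ i ≤ n - 2, q = Polynomial.X ^ i * ratPoly A}

/-- The trajectory `L_P(q) = max(log H(P) - q/(2n-2), log |P(ξ)| + q)`. -/
def LPtraj (n : ℕ) (ξ : ℝ) (Q : Polynomial ℤ) (q : ℝ) : ℝ :=
  max (Real.log (polyHeight Q) - q / (2*(n:ℝ)-2)) (Real.log |Polynomial.aeval ξ Q| + q)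

/-- The `j`-th successive minimum function `L_j(q)`: the infimum over sets of `j`
linearly independent integer polynomials of degree at most `2n-2` of the maximum of
`L_P(q)` over the set. -/
def Lj (n : ℕ) (ξ : ℝ) (j : ℕ) (q : ℝ) : ℝ :=
  sInf {y : ℝ | ∃ S : Finset (Polynomial ℤ), S.card = j ∧
    (∀ Q ∈ S, Q.natDegree ≤ 2*n-2) ∧
    LinearIndependent ℚ (fun Q : {x // x ∈ S} => ratPoly (Q : Polynomial ℤ)) ∧
    y = sSup ((fun Q => LPtraj n ξ Q q) '' (S : Set (Polynomial ℤ)))}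

lemma aux_finrank_degreeLT (m : ℕ) :
    Module.finrank ℚ (Polynomial.degreeLT ℚ m) = m := by
  rw [(Polynomial.degreeLTEquiv ℚ m).finrank_eq]
  simp [Module.finrank_fin_fun]

instance aux_fd_degreeLT (m : ℕ) : FiniteDimensional ℚ (Polynomial.degreeLT ℚ m) :=
  Module.Finite.equiv (Polynomial.degreeLTEquiv ℚ m).symm

lemma aux_map_degreeLT (a : Polynomial ℚ) (m : ℕ) :
    Submodule.map (LinearMap.mulRight ℚ a) (Polynomial.degreeLT ℚ m)
      = Submodule.span ℚ {x | ∃ i < m, x = Polynomial.X ^ i * a} := by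
  classical
  rw [Polynomial.degreeLT_eq_span_X_pow, Submodule.map_span]
  congr 1
  ext x
  simp only [Set.mem_image, Finset.coe_image, Finset.mem_coe, Finset.mem_range,
    LinearMap.mulRight_apply, Set.mem_setOf_eq]
  constructor
  · rintro ⟨y, ⟨i, hi, rfl⟩, rfl⟩; exact ⟨i, hi, rfl⟩
  · rintro ⟨i, hi, rfl⟩; exact ⟨X ^ i, ⟨i, hi, rfl⟩, rfl⟩

/-- three linearly independent integer polynomials, irreducible over `ℚ`
and of degree exactly `n`, give rise to `3(n-1)` polynomials `T^i·P, T^i·Q, T^i·R`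
(`0 ≤ i ≤ n-2`) spanning the space of polynomials of degree at most `2n-2`. -/
theorem stmt7 (n : ℕ) (hn : 2 ≤ n) (P Q R : Polynomial ℤ)
    (hPirr : Irreducible (ratPoly P)) (hQirr : Irreducible (ratPoly Q))
    (hRirr : Irreducible (ratPoly R))
    (hPdeg : (ratPoly P).natDegree = n) (hQdeg : (ratPoly Q).natDegree = n)
    (hRdeg : (ratPoly R).natDegree = n)
    (hind : LinearIndependent ℚ ![ratPoly P, ratPoly Q, ratPoly R]) :
    Submodule.span ℚ (Vset n P ∪ Vset n Q ∪ Vset n R) =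
      Polynomial.degreeLE ℚ ((2*n-2 : ℕ) : WithBot ℕ) := by

  classical
  obtain ⟨m, rfl⟩ : ∃ m, n = m + 2 := ⟨n - 2, by omega⟩
  set p := ratPoly P with hpdef
  set q := ratPoly Q with hqdef
  set r := ratPoly R with hrdef
  have hp0 : p ≠ 0 := hPirr.ne_zero
  have hq0 : q ≠ 0 := hQirr.ne_zero
  have hr0' : r ≠ 0 := hRirr.ne_zero
  -- rewrite the RHS as a degreeLT
  have hnum : (2*(m+2)-2 : ℕ) = 2*m+2 := by omega
  rw [hnum, ← Polynomial.degreeLT_succ_eq_degreeLE]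
  -- no nontrivial rational linear combination vanishes
  have hcomb : ∀ a b c : ℚ, a • p + b • q + c • r = 0 → a = 0 ∧ b = 0 ∧ c = 0 := by
    intro a b c h
    have h2 := Fintype.linearIndependent_iff.mp hind ![a, b, c] ?_
    · exact ⟨h2 0, h2 1, h2 2⟩
    · rw [Fin.sum_univ_three]
      simpa using h
  -- q does not divide p, hence q and p are coprime
  have hqndvd : ¬ q ∣ p := by
    rintro ⟨s, hs⟩
    have hs0 : s ≠ 0 := by rintro rfl; rw [mul_zero] at hs; exact hp0 hs
    have hdeg : s.natDegree = 0 := by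
      have h3 := Polynomial.natDegree_mul hq0 hs0
      rw [← hs, hPdeg, hQdeg] at h3
      omega
    obtain ⟨c, hc⟩ := Polynomial.natDegree_eq_zero.mp hdeg
    have h4 : (-1 : ℚ) • p + c • q + (0:ℚ) • r = 0 := by
      rw [neg_smul, one_smul, zero_smul, add_zero, smul_eq_C_mul, hs, ← hc]
      ring
    exact absurd (hcomb _ _ _ h4).1 (by norm_num)
  have hqp : IsCoprime q p := (hQirr.coprime_iff_not_dvd).mpr hqndvd
  -- multiples of q of degree < n vanish
  have hqd : ∀ d : Polynomial ℚ, q ∣ d → d.degree < ((m+2 : ℕ) : WithBot ℕ) → d = 0 := by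
    intro d hdvd hdeg
    by_contra hd
    have h1 := Polynomial.degree_le_of_dvd hdvd hd
    rw [Polynomial.degree_eq_natDegree hq0, hQdeg] at h1
    exact absurd hdeg (not_lt.mpr h1)
  set U := Polynomial.degreeLT ℚ (m+1) with hUdef
  have hinj : ∀ a : Polynomial ℚ, a ≠ 0 → Function.Injective (LinearMap.mulRight ℚ a) := by
    intro a ha x y hxy
    exact mul_left_injective₀ ha (by simpa using hxy)
  set Sp := Submodule.map (LinearMap.mulRight ℚ p) U with hSpdef
  set Sq := Submodule.map (LinearMap.mulRight ℚ q) U with hSqdef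
  -- spans of the Vsets
  have hVset : ∀ A : Polynomial ℤ,
      Submodule.span ℚ (Vset (m+2) A) =
        Submodule.map (LinearMap.mulRight ℚ (ratPoly A)) U := by
    intro A
    rw [hUdef, aux_map_degreeLT]
    congr 1
    ext x
    simp only [Vset, Set.mem_setOf_eq]
    constructor
    · rintro ⟨i, hi, rfl⟩; exact ⟨i, by omega, rfl⟩
    · rintro ⟨i, hi, rfl⟩; exact ⟨i, by omega, rfl⟩
  -- finite dimensionality and ranks
  haveI hfdSp : FiniteDimensional ℚ Sp :=
    Module.Finite.equiv (Submodule.equivMapOfInjective _ (hinj p hp0) U)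
  haveI hfdSq : FiniteDimensional ℚ Sq :=
    Module.Finite.equiv (Submodule.equivMapOfInjective _ (hinj q hq0) U)
  have frU : Module.finrank ℚ U = m+1 := aux_finrank_degreeLT (m+1)
  have frSp : Module.finrank ℚ Sp = m+1 := by
    rw [← (Submodule.equivMapOfInjective _ (hinj p hp0) U).finrank_eq]; exact frU
  have frSq : Module.finrank ℚ Sq = m+1 := by
    rw [← (Submodule.equivMapOfInjective _ (hinj q hq0) U).finrank_eq]; exact frU
  have hinf : Sp ⊓ Sq = ⊥ := by
    rw [eq_bot_iff]
    rintro x hx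
    rw [Submodule.mem_inf] at hx
    obtain ⟨hxp, hxq⟩ := hx
    obtain ⟨A, hA, rfl⟩ := hxp
    obtain ⟨B, hB, hBx⟩ := hxq
    simp only [LinearMap.mulRight_apply] at hBx ⊢
    have hdvd : q ∣ A * p := ⟨B, by rw [← hBx]; ring⟩
    have hA0 : A = 0 := by
      refine hqd A (hqp.dvd_of_dvd_mul_right hdvd) ?_
      exact lt_of_lt_of_le (Polynomial.mem_degreeLT.mp hA) (Nat.cast_le.mpr (by omega))
    simp [hA0]
  have frW1 : Module.finrank ℚ ↥(Sp ⊔ Sq) = 2*m+2 := by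
    have h5 := Submodule.finrank_sup_add_finrank_inf_eq Sp Sq
    rw [hinf, finrank_bot, frSp, frSq] at h5
    omega
  -- the span is inside degreeLT (2m+3)
  have hmemD : ∀ a : Polynomial ℚ, a ≠ 0 → a.natDegree = m+2 →
      ∀ i, i < m+1 → (Polynomial.X : Polynomial ℚ)^i * a ∈ Polynomial.degreeLT ℚ (2*m+3) := by
    intro a ha hadeg i hi
    rw [Polynomial.mem_degreeLT]
    have hxne : (Polynomial.X : Polynomial ℚ)^i ≠ 0 := pow_ne_zero _ Polynomial.X_ne_zero
    have hne : (Polynomial.X : Polynomial ℚ)^i * a ≠ 0 := mul_ne_zero hxne ha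
    rw [Polynomial.degree_eq_natDegree hne, Polynomial.natDegree_mul hxne ha,
      Polynomial.natDegree_X_pow, hadeg]
    exact Nat.cast_lt.mpr (by omega)
  have hWD : Submodule.span ℚ (Vset (m+2) P ∪ Vset (m+2) Q ∪ Vset (m+2) R)
      ≤ Polynomial.degreeLT ℚ (2*m+3) := by
    rw [Submodule.span_le]
    rintro x ((hx | hx) | hx) <;>
      · obtain ⟨i, hi, rfl⟩ := hx
        first
          | exact hmemD p hp0 hPdeg i (by omega)
          | exact hmemD q hq0 hQdeg i (by omega)
          | exact hmemD r hr0' hRdeg i (by omega)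
  by_cases hcase : ∀ i, i < m+1 → (Polynomial.X : Polynomial ℚ)^i * r ∈ Sp ⊔ Sq
  · -- contradiction case: r and all its shifts lie in the span of p,q shifts
    exfalso
    have h0 : r ∈ Sp ⊔ Sq := by
      have h0' := hcase 0 (by omega)
      rwa [pow_zero, one_mul] at h0'
    rw [Submodule.mem_sup] at h0
    obtain ⟨x, hx, y, hy, hxy⟩ := h0
    obtain ⟨A0, hA0U, rfl⟩ := hx
    obtain ⟨B0, hB0U, rfl⟩ := hy
    simp only [LinearMap.mulRight_apply] at hxy
    have hr0 : r = A0 * p + B0 * q := hxy.symm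
    have hmulX : ∀ s : Polynomial ℚ, s ∈ U → Polynomial.X * s ∈ Polynomial.degreeLT ℚ (m+2) := by
      intro s hs
      rw [Polynomial.mem_degreeLT]
      have h6 : (Polynomial.X * s).degree ≤ 1 + s.degree := by
        simpa [Polynomial.degree_X] using Polynomial.degree_mul_le (Polynomial.X : Polynomial ℚ) s
      refine lt_of_le_of_lt h6 ?_
      have h7 := Polynomial.mem_degreeLT.mp hs
      calc (1 : WithBot ℕ) + s.degree < 1 + ((m+1 : ℕ) : WithBot ℕ) :=
            WithBot.add_lt_add_left (by simp) h7
        _ = ((m+2 : ℕ) : WithBot ℕ) := by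
            push_cast; ring
    have key : ∀ i, i < m+1 →
        (Polynomial.X : Polynomial ℚ)^i * A0 ∈ U ∧ (Polynomial.X : Polynomial ℚ)^i * B0 ∈ U := by
      intro i
      induction i with
      | zero =>
        intro _
        simp only [pow_zero, one_mul]
        exact ⟨hA0U, hB0U⟩
      | succ i ih =>
        intro hi1
        obtain ⟨hA, hB⟩ := ih (by omega)
        have hmem := hcase (i+1) hi1
        rw [Submodule.mem_sup] at hmem
        obtain ⟨x, hx, y, hy, hxy⟩ := hmem
        obtain ⟨A, hAU, rfl⟩ := hx
        obtain ⟨B, hBU, rfl⟩ := hy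
        simp only [LinearMap.mulRight_apply] at hxy
        -- hxy : A * p + B * q = X^(i+1) * r
        have hrel : ((Polynomial.X:Polynomial ℚ)^(i+1) * A0 - A) * p
            = (B - (Polynomial.X:Polynomial ℚ)^(i+1) * B0) * q := by
          have h8 : (Polynomial.X:Polynomial ℚ)^(i+1) * r
              = (Polynomial.X:Polynomial ℚ)^(i+1)*A0 * p
                + (Polynomial.X:Polynomial ℚ)^(i+1)*B0 * q := by rw [hr0]; ring
          linear_combination -h8 - hxy
        have hdvd : q ∣ ((Polynomial.X:Polynomial ℚ)^(i+1) * A0 - A) := by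
          refine hqp.dvd_of_dvd_mul_right ⟨B - (Polynomial.X:Polynomial ℚ)^(i+1) * B0, ?_⟩
          rw [hrel]; ring
        have hd1 : (Polynomial.X:Polynomial ℚ)^(i+1) * A0 ∈ Polynomial.degreeLT ℚ (m+2) := by
          have := hmulX _ hA
          rwa [show (Polynomial.X:Polynomial ℚ) * ((Polynomial.X:Polynomial ℚ)^i * A0)
              = (Polynomial.X:Polynomial ℚ)^(i+1) * A0 by ring] at this
        have hd2 : (A : Polynomial ℚ) ∈ Polynomial.degreeLT ℚ (m+2) :=
          Polynomial.degreeLT_mono (by omega) hAU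
        have hz : (Polynomial.X:Polynomial ℚ)^(i+1) * A0 - A = 0 :=
          hqd _ hdvd (Polynomial.mem_degreeLT.mp (Submodule.sub_mem _ hd1 hd2))
        have hAeq : (Polynomial.X:Polynomial ℚ)^(i+1) * A0 = A := by linear_combination hz
        -- same for B
        have hrel' : ((Polynomial.X:Polynomial ℚ)^(i+1) * B0 - B) * q = 0 := by
          linear_combination hrel - (hAeq) * p
        have hBeq : (Polynomial.X:Polynomial ℚ)^(i+1) * B0 = B := by
          have := mul_eq_zero.mp hrel'
          rcases this with h | h
          · linear_combination h
          · exact absurd h hq0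
        rw [hAeq, hBeq]
        exact ⟨hAU, hBU⟩
    -- conclude A0 and B0 are constants
    have hconst : ∀ s : Polynomial ℚ, (Polynomial.X:Polynomial ℚ)^m * s ∈ U → s.natDegree = 0 := by
      intro s hs
      rcases eq_or_ne s 0 with h | h
      · simp [h]
      · have hm := Polynomial.mem_degreeLT.mp hs
        have hxne : (Polynomial.X : Polynomial ℚ)^m ≠ 0 := pow_ne_zero _ Polynomial.X_ne_zero
        have hne : (Polynomial.X : Polynomial ℚ)^m * s ≠ 0 := mul_ne_zero hxne h
        rw [Polynomial.degree_eq_natDegree hne, Polynomial.natDegree_mul hxne h,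
          Polynomial.natDegree_X_pow, Nat.cast_lt] at hm
        omega
    obtain ⟨hA, hB⟩ := key m (by omega)
    obtain ⟨a, ha⟩ := Polynomial.natDegree_eq_zero.mp (hconst A0 hA)
    obtain ⟨b, hb⟩ := Polynomial.natDegree_eq_zero.mp (hconst B0 hB)
    have h9 : a • p + b • q + (-1:ℚ) • r = 0 := by
      rw [neg_smul, one_smul, smul_eq_C_mul, smul_eq_C_mul, hr0, ← ha, ← hb]
      ring
    exact absurd (hcomb _ _ _ h9).2.2 (by norm_num)
  · -- main case: some shift of r is outside, dimension count
    push_neg at hcase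
    obtain ⟨i, hi, hnot⟩ := hcase
    set W := Submodule.span ℚ (Vset (m+2) P ∪ Vset (m+2) Q ∪ Vset (m+2) R) with hWdef
    have hSpan1 : Submodule.span ℚ (Vset (m+2) P) = Sp := hVset P
    have hSpan2 : Submodule.span ℚ (Vset (m+2) Q) = Sq := hVset Q
    have hW1leW : Sp ⊔ Sq ≤ W := by
      rw [hWdef]
      refine sup_le ?_ ?_
      · rw [← hSpan1]
        exact Submodule.span_mono (by intro x hx; exact Or.inl (Or.inl hx))
      · rw [← hSpan2]
        exact Submodule.span_mono (by intro x hx; exact Or.inl (Or.inr hx))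
    have hxW : (Polynomial.X : Polynomial ℚ)^i * r ∈ W := by
      refine Submodule.subset_span (Or.inr ?_)
      exact ⟨i, by omega, rfl⟩
    have hlt : Sp ⊔ Sq < W := lt_of_le_of_ne hW1leW (by
      intro h
      apply hnot
      rw [h]
      exact hxW)
    haveI : FiniteDimensional ℚ W := Submodule.finiteDimensional_of_le hWD
    have h10 := Submodule.finrank_lt_finrank_of_lt hlt
    rw [frW1] at h10
    refine Submodule.eq_of_le_of_finrank_le hWD ?_
    rw [aux_finrank_degreeLT]
    omega
end
end

section
/- Let n ≥ 2 be an integer and ξ a transcendental real number. Then there is no two-dimensional ℚ-vector subspace of the space of polynomials of degree at most n that contains the best approximation polynomial P_k for all sufficiently large k; consequently, there are infinitely many integers k ≥ 2 that are good for (n, ξ). -/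
open Polynomial Filter

noncomputable section

lemma ratPoly_ne_zero {P : Polynomial ℤ} (h : P ≠ 0) : ratPoly P ≠ 0 := by
  simpa [ratPoly, Polynomial.map_eq_zero_iff (f := Int.castRingHom ℚ)
    (Int.cast_injective)] using h

lemma coeff_ratPoly (P : Polynomial ℤ) (i : ℕ) : (ratPoly P).coeff i = (P.coeff i : ℚ) := by
  simp [ratPoly]

lemma aeval_ratPoly (ξ : ℝ) (P : Polynomial ℤ) :
    Polynomial.aeval ξ (ratPoly P) = Polynomial.aeval ξ P := by
  have : (Int.castRingHom ℚ) = algebraMap ℤ ℚ := rfl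
  rw [ratPoly, this, aeval_map_algebraMap]

lemma eval_ne_zero_of_trans {ξ : ℝ} (hξ : Transcendental ℚ ξ) {P : Polynomial ℤ}
    (h : P ≠ 0) : Polynomial.aeval ξ P ≠ 0 := by
  rw [← aeval_ratPoly]
  exact fun hz => hξ ⟨ratPoly P, ratPoly_ne_zero h, hz⟩

lemma natAbs_coeff_le_height (P : Polynomial ℤ) (i : ℕ) : (P.coeff i).natAbs ≤ polyHeight P := by
  by_cases h : P.coeff i = 0
  · simp [h]
  · exact Finset.le_sup (f := fun i => (P.coeff i).natAbs) (Polynomial.mem_support_iff.2 h)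

lemma height_le {P : Polynomial ℤ} {h : ℕ} (H : ∀ i, (P.coeff i).natAbs ≤ h) :
    polyHeight P ≤ h := Finset.sup_le fun i _ => H i

lemma polyHeight_neg (P : Polynomial ℤ) : polyHeight (-P) = polyHeight P := by
  simp [polyHeight]

lemma one_le_height {P : Polynomial ℤ} (h : P ≠ 0) : 1 ≤ polyHeight P := by
  obtain ⟨i, hi⟩ : ∃ i, P.coeff i ≠ 0 := by
    by_contra hc
    push_neg at hc
    exact h (Polynomial.ext fun i => by simp [hc i])
  exact le_trans (Int.natAbs_pos.2 hi) (natAbs_coeff_le_height P i)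

lemma finite_polys (n h : ℕ) :
    {R : Polynomial ℤ | R.natDegree ≤ n ∧ polyHeight R ≤ h}.Finite := by
  have : {R : Polynomial ℤ | R.natDegree ≤ n ∧ polyHeight R ≤ h} ⊆
      Set.range (fun f : Fin (n+1) → Finset.Icc (-(h:ℤ)) (h:ℤ) =>
        ∑ i : Fin (n+1), Polynomial.monomial (i : ℕ) ((f i : ℤ))) := by
    rintro R ⟨hdeg, hht⟩
    refine ⟨fun i => ⟨R.coeff i, ?_⟩, ?_⟩
    · have := le_trans (natAbs_coeff_le_height R i) hht
      simp only [Finset.mem_Icc]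
      omega
    · have h1 : R = ∑ i ∈ Finset.range (n+1), Polynomial.monomial i (R.coeff i) :=
        Polynomial.as_sum_range' R (n+1) (Nat.lt_succ_of_le hdeg)
      rw [← Fin.sum_univ_eq_sum_range (fun i => Polynomial.monomial i (R.coeff i)) (n+1)] at h1
      exact h1.symm
  exact Set.Finite.subset (Set.finite_range _) this

lemma exists_min_poly (ξ : ℝ) (n h : ℕ)
    (hne : ∃ R : Polynomial ℤ, R ≠ 0 ∧ R.natDegree ≤ n ∧ polyHeight R ≤ h) :
    ∃ R0 : Polynomial ℤ, (R0 ≠ 0 ∧ R0.natDegree ≤ n ∧ polyHeight R0 ≤ h) ∧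
      ∀ R : Polynomial ℤ, R ≠ 0 → R.natDegree ≤ n → polyHeight R ≤ h →
        |Polynomial.aeval ξ R0| ≤ |Polynomial.aeval ξ R| := by
  have hfin : {R : Polynomial ℤ | R ≠ 0 ∧ R.natDegree ≤ n ∧ polyHeight R ≤ h}.Finite :=
    Set.Finite.subset (finite_polys n h) (fun R hR => ⟨hR.2.1, hR.2.2⟩)
  obtain ⟨R, hR⟩ := hne
  have hne' : hfin.toFinset.Nonempty := ⟨R, by simpa using hR⟩
  obtain ⟨R0, hR0mem, hR0min⟩ := Finset.exists_min_image hfin.toFinset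
    (fun R => |Polynomial.aeval ξ R|) hne'
  rw [Set.Finite.mem_toFinset] at hR0mem
  exact ⟨R0, hR0mem, fun R h1 h2 h3 => hR0min R (by simpa using (⟨h1, h2, h3⟩ :
    R ≠ 0 ∧ R.natDegree ≤ n ∧ polyHeight R ≤ h))⟩


lemma dirichlet (ξ : ℝ) (H : ℕ) (hH : 1 ≤ H) :
    ∃ Q : Polynomial ℤ, Q ≠ 0 ∧ Q.natDegree ≤ 2 ∧ polyHeight Q ≤ H ∧
      |Polynomial.aeval ξ Q| ≤ 2*(1+|ξ|+ξ^2) / (H:ℝ)^2 := by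
  set M : ℝ := 1 + |ξ| + ξ^2 with hM
  have hMpos : (0:ℝ) < M := by positivity
  have hHpos : (0:ℝ) < H := by exact_mod_cast hH
  set R : ℕ := (H+1)^3 - 1 with hR
  have hR1 : 1 ≤ R := by
    have : 2^3 ≤ (H+1)^3 := Nat.pow_le_pow_left (by omega) 3
    omega
  have hRpos : (0:ℝ) < R := by exact_mod_cast hR1
  set v : ℕ × ℕ × ℕ → ℝ := fun t => t.1 + t.2.1 * ξ + t.2.2 * ξ^2 with hv
  have hvabs : ∀ t : ℕ × ℕ × ℕ, t.1 ≤ H → t.2.1 ≤ H → t.2.2 ≤ H → |v t| ≤ H * M := by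
    intro t h1 h2 h3
    have e1 : (t.1 : ℝ) ≤ H := by exact_mod_cast h1
    have e2 : (t.2.1 : ℝ) ≤ H := by exact_mod_cast h2
    have e3 : (t.2.2 : ℝ) ≤ H := by exact_mod_cast h3
    have p1 : (0:ℝ) ≤ t.1 := Nat.cast_nonneg _
    have p2 : (0:ℝ) ≤ t.2.1 := Nat.cast_nonneg _
    have p3 : (0:ℝ) ≤ t.2.2 := Nat.cast_nonneg _
    have haξ : 0 ≤ |ξ| := abs_nonneg ξ
    have hsq : 0 ≤ ξ^2 := sq_nonneg ξ
    calc |v t| ≤ |(t.1:ℝ)| + |(t.2.1:ℝ) * ξ| + |(t.2.2:ℝ) * ξ^2| := abs_add_three _ _ _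
      _ = t.1 + t.2.1 * |ξ| + t.2.2 * ξ^2 := by
          rw [abs_mul, abs_mul, abs_of_nonneg p1, abs_of_nonneg p2, abs_of_nonneg p3,
            abs_of_nonneg hsq]
      _ ≤ H * 1 + H * |ξ| + H * ξ^2 := by
          have := mul_le_mul_of_nonneg_right e2 haξ
          have := mul_le_mul_of_nonneg_right e3 hsq
          linarith
      _ = H * M := by rw [hM]; ring
  set u : ℕ × ℕ × ℕ → ℝ := fun t => (v t + H * M)/(2 * (H * M)) with hu
  have hub : ∀ a : ℕ × ℕ × ℕ, a.1 ≤ H → a.2.1 ≤ H → a.2.2 ≤ H →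
      0 ≤ u a * R ∧ u a * R ≤ R := by
    intro a h1 h2 h3
    have habs := abs_le.1 (hvabs a h1 h2 h3)
    have hu0 : 0 ≤ u a := div_nonneg (by linarith) (by positivity)
    have hu1 : u a ≤ 1 := by
      rw [hu, div_le_one (by positivity)]; linarith
    exact ⟨mul_nonneg hu0 hRpos.le, by
      calc u a * R ≤ 1 * R := mul_le_mul_of_nonneg_right hu1 hRpos.le
        _ = R := one_mul _⟩
  set b : ℕ × ℕ × ℕ → ℕ := fun t => min (Nat.floor (u t * R)) (R - 1) with hb
  set s : Finset (ℕ × ℕ × ℕ) :=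
    Finset.range (H+1) ×ˢ Finset.range (H+1) ×ˢ Finset.range (H+1) with hs
  have hcard : (Finset.range R).card < s.card := by
    have hsc : s.card = (H+1)^3 := by
      simp only [hs, Finset.card_product, Finset.card_range]; ring
    rw [Finset.card_range, hsc]; omega
  obtain ⟨t, ht, t', ht', htne, hbeq⟩ :=
    Finset.exists_ne_map_eq_of_card_lt_of_maps_to hcard
      (f := b) (fun a _ => Finset.mem_range.2 (lt_of_le_of_lt (min_le_right _ _) (by omega)))
  simp only [hs, Finset.mem_product, Finset.mem_range, Nat.lt_succ_iff] at ht ht'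
  obtain ⟨ht1, ht2, ht3⟩ := ht
  obtain ⟨ht1', ht2', ht3'⟩ := ht'
  -- key : |u t * R - u t' * R| ≤ 1
  have castR : ((R-1:ℕ):ℝ) = (R:ℝ) - 1 := by
    rw [Nat.cast_sub hR1]; simp
  have cast1 : ∀ z : ℝ, 0 ≤ z → R - 1 ≤ Nat.floor z → (R:ℝ) - 1 ≤ z := by
    intro z hz hfz
    have h1 : ((R-1:ℕ):ℝ) ≤ (Nat.floor z : ℝ) := by exact_mod_cast hfz
    have h2 := Nat.floor_le hz
    linarith [castR ▸ h1]
  have key : ∀ x y : ℝ, 0 ≤ x → x ≤ R → 0 ≤ y → y ≤ R →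
      min (Nat.floor x) (R-1) = min (Nat.floor y) (R-1) → |x - y| ≤ 1 := by
    intro x y hx0 hxR hy0 hyR hmineq
    by_cases hx : Nat.floor x ≤ R - 1
    · by_cases hy : Nat.floor y ≤ R - 1
      · have hfeq : Nat.floor x = Nat.floor y := by omega
        have l1 : (Nat.floor x : ℝ) ≤ x := Nat.floor_le hx0
        have l2 : x < Nat.floor x + 1 := Nat.lt_floor_add_one x
        have l3 : (Nat.floor y : ℝ) ≤ y := Nat.floor_le hy0
        have l4 : y < Nat.floor y + 1 := Nat.lt_floor_add_one y
        rw [hfeq] at l1 l2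
        rw [abs_le]; constructor <;> linarith
      · have h1 : R - 1 ≤ Nat.floor x := by omega
        have h2 : R - 1 ≤ Nat.floor y := by omega
        have c1 := cast1 x hx0 h1
        have c2 := cast1 y hy0 h2
        rw [abs_le]; constructor <;> linarith
    · have h1 : R - 1 ≤ Nat.floor x := by omega
      have h2 : R - 1 ≤ Nat.floor y := by omega
      have c1 := cast1 x hx0 h1
      have c2 := cast1 y hy0 h2
      rw [abs_le]; constructor <;> linarith
  have ⟨hx0, hxR⟩ := hub t ht1 ht2 ht3
  have ⟨hy0, hyR⟩ := hub t' ht1' ht2' ht3'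
  have hkey := key _ _ hx0 hxR hy0 hyR hbeq
  -- |v t - v t'| ≤ 2 H M / R
  have hvdiff : |v t - v t'| ≤ 2 * (H * M) / R := by
    have hexp : u t * R - u t' * R = (v t - v t') * R / (2 * (H * M)) := by
      rw [hu]; field_simp; ring
    rw [hexp] at hkey
    rw [abs_div, abs_mul, abs_of_nonneg hRpos.le, abs_of_pos (by positivity :
      (0:ℝ) < 2 * (H * M)), div_le_one (by positivity)] at hkey
    rw [le_div_iff₀ hRpos]
    linarith
  have hfinal : |v t - v t'| ≤ 2 * M / (H:ℝ)^2 := by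
    have hRge : (H:ℝ)^3 ≤ R := by
      have : H^3 ≤ R := by
        have : H^3 + 3*H^2 + 3*H + 1 = (H+1)^3 := by ring
        omega
      exact_mod_cast this
    calc |v t - v t'| ≤ 2 * (H * M) / R := hvdiff
      _ ≤ 2 * (H * M) / (H:ℝ)^3 := by
          apply div_le_div_of_nonneg_left (by positivity) (by positivity) hRge
      _ = 2 * M / (H:ℝ)^2 := by field_simp
  -- build polynomial
  set e0 : ℤ := (t.1 : ℤ) - t'.1 with he0
  set e1 : ℤ := (t.2.1 : ℤ) - t'.2.1 with he1
  set e2 : ℤ := (t.2.2 : ℤ) - t'.2.2 with he2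
  set Q : Polynomial ℤ := Polynomial.C e0 + Polynomial.C e1 * Polynomial.X +
    Polynomial.C e2 * Polynomial.X ^ 2 with hQ
  have hc0 : Q.coeff 0 = e0 := by
    rw [hQ, Polynomial.coeff_add, Polynomial.coeff_add, Polynomial.coeff_C,
      Polynomial.coeff_C_mul, Polynomial.coeff_C_mul, Polynomial.coeff_X_pow,
      Polynomial.coeff_X]
    norm_num
  have hc1 : Q.coeff 1 = e1 := by
    rw [hQ, Polynomial.coeff_add, Polynomial.coeff_add, Polynomial.coeff_C,
      Polynomial.coeff_C_mul, Polynomial.coeff_C_mul, Polynomial.coeff_X_pow,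
      Polynomial.coeff_X]
    norm_num
  have hc2 : Q.coeff 2 = e2 := by
    rw [hQ, Polynomial.coeff_add, Polynomial.coeff_add, Polynomial.coeff_C,
      Polynomial.coeff_C_mul, Polynomial.coeff_C_mul, Polynomial.coeff_X_pow,
      Polynomial.coeff_X]
    norm_num
  have hcge : ∀ i, 3 ≤ i → Q.coeff i = 0 := by
    intro i hi
    have h1 : Q.natDegree ≤ 2 := by rw [hQ]; compute_degree
    exact Polynomial.coeff_eq_zero_of_natDegree_lt (by omega)
  refine ⟨Q, ?_, by rw [hQ]; compute_degree, ?_, ?_⟩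
  · intro h0
    apply htne
    have hz0 : e0 = 0 := by rw [← hc0, h0]; simp
    have hz1 : e1 = 0 := by rw [← hc1, h0]; simp
    have hz2 : e2 = 0 := by rw [← hc2, h0]; simp
    have : t.1 = t'.1 := by omega
    have : t.2.1 = t'.2.1 := by omega
    have : t.2.2 = t'.2.2 := by omega
    exact Prod.ext ‹t.1 = t'.1› (Prod.ext ‹t.2.1 = t'.2.1› ‹t.2.2 = t'.2.2›)
  · apply Finset.sup_le
    intro i _
    match i with
    | 0 => rw [hc0]; omega
    | 1 => rw [hc1]; omega
    | 2 => rw [hc2]; omega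
    | (m+3) => rw [hcge (m+3) (by omega)]; simp
  · have heval : Polynomial.aeval ξ Q = v t - v t' := by
      rw [hQ]
      simp only [map_add, map_mul, Polynomial.aeval_C, Polynomial.aeval_X, map_pow]
      rw [hv, he0, he1, he2]
      push_cast
      ring
    rw [heval]
    calc |v t - v t'| ≤ 2 * M / (H:ℝ)^2 := hfinal
      _ = 2*(1+|ξ|+ξ^2) / (H:ℝ)^2 := by rw [hM]

section Seq

variable {n : ℕ} {ξ : ℝ} {P : ℕ → Polynomial ℤ}

lemma abs_coeff_le_real (Q : Polynomial ℤ) (i : ℕ) :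
    |(Q.coeff i : ℝ)| ≤ (polyHeight Q : ℝ) := by
  have h := natAbs_coeff_le_height Q i
  have : ((Q.coeff i).natAbs : ℝ) = |(Q.coeff i : ℝ)| := by
    rw [Nat.cast_natAbs]; push_cast; ring
  rw [← this]; exact_mod_cast h

lemma consec_indep (hξ : Transcendental ℚ ξ) (hP : IsBestApproxSeq n ξ P) :
    ∀ k, 1 ≤ k → LinearIndependent ℚ ![ratPoly (P k), ratPoly (P (k+1))] := by
  intro k hk
  rw [LinearIndependent.pair_iff]
  intro s t hst
  by_contra hcon
  have hx : ratPoly (P k) ≠ 0 := ratPoly_ne_zero (hP.ne_zero k hk)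
  by_cases ht : t = 0
  · subst ht
    simp only [zero_smul, add_zero, smul_eq_zero] at hst
    rcases hst with hs | h0
    · exact hcon ⟨hs, rfl⟩
    · exact hx h0
  · set q : ℚ := -(s/t) with hq
    have hy : ratPoly (P (k+1)) = q • ratPoly (P k) := by
      have h1 : t • ratPoly (P (k+1)) = -(s • ratPoly (P k)) :=
        eq_neg_of_add_eq_zero_right hst
      have := congrArg (fun z => t⁻¹ • z) h1
      simp only [smul_smul, inv_mul_cancel₀ ht, one_smul, smul_neg] at this
      rw [this, ← neg_smul, hq]
      congr 1
      field_simp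
    have hev : Polynomial.aeval ξ (P (k+1)) = (q:ℝ) * Polynomial.aeval ξ (P k) := by
      rw [← aeval_ratPoly ξ, ← aeval_ratPoly ξ, hy, map_smul, Rat.smul_def]
    have hexnz : Polynomial.aeval ξ (P k) ≠ 0 := eval_ne_zero_of_trans hξ (hP.ne_zero k hk)
    have hqlt : |(q:ℝ)| < 1 := by
      have h2 := hP.eval_lt k hk
      rw [hev, abs_mul] at h2
      have hpos : 0 < |Polynomial.aeval ξ (P k)| := abs_pos.2 hexnz
      nlinarith
    have hcoeff : ∀ i, ((P (k+1)).coeff i : ℝ) = (q:ℝ) * ((P k).coeff i : ℝ) := by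
      intro i
      have := congrArg (fun z => Polynomial.coeff z i) hy
      simp only [Polynomial.coeff_smul, smul_eq_mul, coeff_ratPoly] at this
      exact_mod_cast this
    have hhle : polyHeight (P (k+1)) ≤ polyHeight (P k) := by
      apply height_le
      intro i
      have h3 : |((P (k+1)).coeff i : ℝ)| ≤ |((P k).coeff i : ℝ)| := by
        rw [hcoeff i, abs_mul]
        have := abs_nonneg ((P k).coeff i : ℝ)
        nlinarith
      have h4 : (((P (k+1)).coeff i).natAbs : ℝ) ≤ (((P k).coeff i).natAbs : ℝ) := by
        rw [Nat.cast_natAbs, Nat.cast_natAbs]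
        push_cast
        exact h3
      exact le_trans (by exact_mod_cast h4) (natAbs_coeff_le_height (P k) i)
    exact absurd (hP.height_lt k hk) (not_lt.2 hhle)

lemma height_growth (hP : IsBestApproxSeq n ξ P) :
    ∀ a, 1 ≤ a → ∀ m, polyHeight (P a) + m ≤ polyHeight (P (a + m)) := by
  intro a ha m
  induction m with
  | zero => simp
  | succ m ih =>
      have h2 : polyHeight (P (a+m)) + 1 ≤ polyHeight (P (a+m+1)) := hP.height_lt (a+m) (by omega)
      have h3 : a + (m+1) = (a+m)+1 := by omega
      rw [h3]
      omega

lemma height_mono (hP : IsBestApproxSeq n ξ P) :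
    ∀ a, 1 ≤ a → ∀ b, a ≤ b → polyHeight (P a) ≤ polyHeight (P b) := by
  intro a ha b hab
  have := height_growth hP a ha (b - a)
  have hb : a + (b - a) = b := by omega
  rw [hb] at this
  omega

lemma eval_mono (hP : IsBestApproxSeq n ξ P) :
    ∀ a, 1 ≤ a → ∀ b, a ≤ b → |Polynomial.aeval ξ (P b)| ≤ |Polynomial.aeval ξ (P a)| := by
  intro a ha b hab
  obtain ⟨m, rfl⟩ : ∃ m, b = a + m := ⟨b - a, by omega⟩
  clear hab
  induction m with
  | zero => simp
  | succ m ih =>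
      exact le_trans (le_of_lt (hP.eval_lt (a+m) (by omega))) ih

lemma min_below (hξ : Transcendental ℚ ξ) (hP : IsBestApproxSeq n ξ P) :
    ∀ k, 1 ≤ k → ∀ Q : Polynomial ℤ, Q ≠ 0 → Q.natDegree ≤ n →
      polyHeight Q < polyHeight (P (k+1)) →
      |Polynomial.aeval ξ (P k)| ≤ |Polynomial.aeval ξ Q| := by
  intro k hk Q hQ0 hQd hQh
  obtain ⟨R0, ⟨hR00, hR0d, hR0h⟩, hR0min⟩ :=
    exists_min_poly ξ n (polyHeight Q) ⟨Q, hQ0, hQd, le_refl _⟩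
  obtain ⟨m, hm1, hm⟩ := hP.complete R0 hR00 hR0d
    (fun R h1 h2 h3 => hR0min R h1 h2 (le_trans h3 hR0h))
  have hPmh : polyHeight (P m) ≤ polyHeight Q := by
    rcases hm with rfl | rfl
    · exact hR0h
    · rw [← polyHeight_neg (P m)]; exact hR0h
  have hPme : |Polynomial.aeval ξ (P m)| = |Polynomial.aeval ξ R0| := by
    rcases hm with rfl | rfl
    · rfl
    · rw [map_neg, abs_neg]
  have hmk : m ≤ k := by
    by_contra hc
    push_neg at hc
    have := height_mono hP (k+1) (by omega) m hc
    omega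
  calc |Polynomial.aeval ξ (P k)| ≤ |Polynomial.aeval ξ (P m)| := eval_mono hP m hm1 k hmk
    _ = |Polynomial.aeval ξ R0| := hPme
    _ ≤ |Polynomial.aeval ξ Q| := hR0min Q hQ0 hQd (le_refl _)

lemma finrank_span_pair {x y : Polynomial ℚ} (h : LinearIndependent ℚ ![x, y]) :
    Module.finrank ℚ (Submodule.span ℚ ({x, y} : Set (Polynomial ℚ))) = 2 := by
  have hr : Set.range ![x, y] = ({x, y} : Set (Polynomial ℚ)) := by
    ext z
    simp [Fin.exists_fin_two, or_comm]
  rw [← hr, finrank_span_eq_card h]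
  simp


end Seq

set_option maxHeartbeats 1000000 in
lemma no_two_dim (n : ℕ) (hn : 2 ≤ n) (ξ : ℝ) (hξ : Transcendental ℚ ξ)
    (P : ℕ → Polynomial ℤ) (hP : IsBestApproxSeq n ξ P) :
    ¬ ∃ W : Submodule ℚ (Polynomial ℚ), Module.finrank ℚ W = 2 ∧
        W ≤ Polynomial.degreeLE ℚ ((n : ℕ) : WithBot ℕ) ∧
        ∀ᶠ k in Filter.atTop, ratPoly (P k) ∈ W := by
  rintro ⟨W, hW2, hWle, hev⟩
  obtain ⟨K0, hK0⟩ := Filter.eventually_atTop.1 hev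
  set K := max K0 1 with hK
  have hK1 : 1 ≤ K := le_max_right _ _
  have hKin : ∀ k, K ≤ k → ratPoly (P k) ∈ W := fun k hk =>
    hK0 k (le_trans (le_max_left _ _) hk)
  haveI hfdLE : FiniteDimensional ℚ (Polynomial.degreeLE ℚ ((n : ℕ) : WithBot ℕ)) := by
    rw [Polynomial.degreeLE_eq_span_X_pow]
    exact FiniteDimensional.span_of_finite ℚ (Finset.finite_toSet _)
  haveI : FiniteDimensional ℚ W := Submodule.finiteDimensional_of_le hWle
  set A := P K with hAdef
  set B := P (K+1) with hBdef
  have hA0 : A ≠ 0 := hP.ne_zero K hK1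
  have hB0 : B ≠ 0 := hP.ne_zero (K+1) (by omega)
  have hAB : LinearIndependent ℚ ![ratPoly A, ratPoly B] := consec_indep hξ hP K hK1
  have hAW : ratPoly A ∈ W := hKin K le_rfl
  have hBW : ratPoly B ∈ W := hKin (K+1) (by omega)
  have hspan : Submodule.span ℚ ({ratPoly A, ratPoly B} : Set (Polynomial ℚ)) = W := by
    apply Submodule.eq_of_le_of_finrank_le
    · rw [Submodule.span_le]
      rintro z (rfl | rfl) <;> assumption
    · rw [hW2, finrank_span_pair hAB]
  have hminor : ∃ i j : ℕ, (A.coeff i) * (B.coeff j) - (A.coeff j) * (B.coeff i) ≠ 0 := by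
    by_contra hc
    push_neg at hc
    obtain ⟨i0, hi0⟩ : ∃ i, A.coeff i ≠ 0 := by
      by_contra h
      push_neg at h
      exact hA0 (Polynomial.ext fun i => by simp [h i])
    have hz := (LinearIndependent.pair_iff.1 hAB ((B.coeff i0 : ℚ)) (-((A.coeff i0 : ℚ))) ?_).2
    · exact hi0 (by exact_mod_cast neg_eq_zero.1 hz)
    · apply Polynomial.ext
      intro j
      simp only [Polynomial.coeff_add, Polynomial.coeff_smul, smul_eq_mul, coeff_ratPoly,
        Polynomial.coeff_zero, neg_mul]
      have h6 : ((A.coeff i0 : ℚ)) * (B.coeff j : ℚ) - ((A.coeff j : ℚ)) * (B.coeff i0 : ℚ)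
          = 0 := by exact_mod_cast hc i0 j
      linarith
  obtain ⟨i, j, hd⟩ := hminor
  set d : ℝ := (A.coeff i : ℝ) * (B.coeff j : ℝ) - (A.coeff j : ℝ) * (B.coeff i : ℝ) with hdd
  have hdR : d ≠ 0 := by
    have : ((A.coeff i * B.coeff j - A.coeff j * B.coeff i : ℤ) : ℝ) ≠ 0 := by exact_mod_cast hd
    push_cast at this
    exact this
  set eA : ℝ := Polynomial.aeval ξ A with heA
  set eB : ℝ := Polynomial.aeval ξ B with heB
  set lam : ℝ := (eA * (B.coeff j : ℝ) - eB * (A.coeff j : ℝ)) / d with hlamdef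
  set mu : ℝ := ((A.coeff i : ℝ) * eB - (B.coeff i : ℝ) * eA) / d with hmudef
  have hlamA : lam * (A.coeff i : ℝ) + mu * (A.coeff j : ℝ) = eA := by
    rw [hlamdef, hmudef]; field_simp; ring
  have hlamB : lam * (B.coeff i : ℝ) + mu * (B.coeff j : ℝ) = eB := by
    rw [hlamdef, hmudef]; field_simp; ring
  have hrep : ∀ x : Polynomial ℚ, x ∈ W → Polynomial.aeval ξ x =
      lam * ((x.coeff i : ℚ) : ℝ) + mu * ((x.coeff j : ℚ) : ℝ) := by
    intro x hx
    rw [← hspan] at hx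
    obtain ⟨a, b, hab⟩ := Submodule.mem_span_pair.1 hx
    rw [← hab]
    have hci : ((a • ratPoly A + b • ratPoly B).coeff i : ℚ) =
        a * (A.coeff i : ℚ) + b * (B.coeff i : ℚ) := by
      simp [Polynomial.coeff_add, Polynomial.coeff_smul, smul_eq_mul, coeff_ratPoly]
    have hcj : ((a • ratPoly A + b • ratPoly B).coeff j : ℚ) =
        a * (A.coeff j : ℚ) + b * (B.coeff j : ℚ) := by
      simp [Polynomial.coeff_add, Polynomial.coeff_smul, smul_eq_mul, coeff_ratPoly]
    rw [hci, hcj, map_add, map_smul, map_smul, Rat.smul_def, Rat.smul_def,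
      aeval_ratPoly, aeval_ratPoly, ← heA, ← heB, ← hlamA, ← hlamB]
    push_cast
    ring
  have hexA : eA ≠ 0 := eval_ne_zero_of_trans hξ hA0
  have hlm : ¬(lam = 0 ∧ mu = 0) := by
    rintro ⟨h1, h2⟩
    rw [h1, h2] at hlamA
    simp at hlamA
    exact hexA hlamA.symm
  set δ : ℝ := max |lam| |mu| with hδdef
  have hδpos : 0 < δ := by
    rcases not_and_or.1 hlm with h | h
    · exact lt_of_lt_of_le (abs_pos.2 h) (le_max_left _ _)
    · exact lt_of_lt_of_le (abs_pos.2 h) (le_max_right _ _)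
  have hinj : ∀ x : Polynomial ℚ, x ∈ W → x.coeff i = 0 → x.coeff j = 0 → x = 0 := by
    intro x hx hxi hxj
    rw [← hspan] at hx
    obtain ⟨a, b, hab⟩ := Submodule.mem_span_pair.1 hx
    have hci : a * (A.coeff i : ℚ) + b * (B.coeff i : ℚ) = 0 := by
      have := congrArg (fun z => Polynomial.coeff z i) hab
      simp only [Polynomial.coeff_add, Polynomial.coeff_smul, smul_eq_mul,
        coeff_ratPoly] at this
      rw [this]; exact hxi
    have hcj : a * (A.coeff j : ℚ) + b * (B.coeff j : ℚ) = 0 := by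
      have := congrArg (fun z => Polynomial.coeff z j) hab
      simp only [Polynomial.coeff_add, Polynomial.coeff_smul, smul_eq_mul,
        coeff_ratPoly] at this
      rw [this]; exact hxj
    have hdQ : (A.coeff i : ℚ) * (B.coeff j : ℚ) - (A.coeff j : ℚ) * (B.coeff i : ℚ) ≠ 0 := by
      exact_mod_cast hd
    have ha : a = 0 := by
      have h1 : a * ((A.coeff i : ℚ) * (B.coeff j : ℚ) - (A.coeff j : ℚ) * (B.coeff i : ℚ))
          = 0 := by linear_combination (B.coeff j : ℚ) * hci - (B.coeff i : ℚ) * hcj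
      exact (mul_eq_zero.1 h1).resolve_right hdQ
    have hb : b = 0 := by
      have h1 : b * ((A.coeff i : ℚ) * (B.coeff j : ℚ) - (A.coeff j : ℚ) * (B.coeff i : ℚ))
          = 0 := by linear_combination (A.coeff i : ℚ) * hcj - (A.coeff j : ℚ) * hci
      exact (mul_eq_zero.1 h1).resolve_right hdQ
    rw [← hab, ha, hb]
    simp
  have hbound : ∀ k, K ≤ k →
      δ ≤ 2 * (polyHeight (P (k+1)) : ℝ) * |Polynomial.aeval ξ (P k)| := by
    intro k hk
    have hk1 : 1 ≤ k := le_trans hK1 hk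
    set R := P k with hRdef
    set S := P (k+1) with hSdef
    have hR0 : R ≠ 0 := hP.ne_zero k hk1
    have hRW : ratPoly R ∈ W := hKin k hk
    have hSW : ratPoly S ∈ W := hKin (k+1) (by omega)
    have hRS : LinearIndependent ℚ ![ratPoly R, ratPoly S] := consec_indep hξ hP k hk1
    set G : ℤ := R.coeff i * S.coeff j - R.coeff j * S.coeff i with hG
    have hG0 : G ≠ 0 := by
      intro hGz
      have hGQ : (R.coeff i : ℚ) * (S.coeff j : ℚ) - (R.coeff j : ℚ) * (S.coeff i : ℚ)
          = 0 := by exact_mod_cast hGz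
      have hstep1 : (S.coeff i : ℚ) = 0 ∧ -(R.coeff i : ℚ) = 0 := by
        apply LinearIndependent.pair_iff.1 hRS
        apply hinj _ (Submodule.add_mem _ (Submodule.smul_mem _ _ hRW)
          (Submodule.smul_mem _ _ hSW))
        · simp only [Polynomial.coeff_add, Polynomial.coeff_smul, smul_eq_mul, coeff_ratPoly]
          ring
        · simp only [Polynomial.coeff_add, Polynomial.coeff_smul, smul_eq_mul, coeff_ratPoly]
          linear_combination -hGQ
      have hstep2 : (S.coeff j : ℚ) = 0 ∧ -(R.coeff j : ℚ) = 0 := by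
        apply LinearIndependent.pair_iff.1 hRS
        apply hinj _ (Submodule.add_mem _ (Submodule.smul_mem _ _ hRW)
          (Submodule.smul_mem _ _ hSW))
        · simp only [Polynomial.coeff_add, Polynomial.coeff_smul, smul_eq_mul, coeff_ratPoly]
          linear_combination hGQ
        · simp only [Polynomial.coeff_add, Polynomial.coeff_smul, smul_eq_mul, coeff_ratPoly]
          ring
      have hRz : ratPoly R = 0 := by
        apply hinj _ hRW
        · rw [coeff_ratPoly]
          exact neg_eq_zero.1 hstep1.2
        · rw [coeff_ratPoly]
          exact neg_eq_zero.1 hstep2.2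
      exact ratPoly_ne_zero hR0 hRz
    have hG1 : (1 : ℝ) ≤ |(G : ℝ)| := by
      have := Int.one_le_abs hG0
      exact_mod_cast this
    have heRrep : Polynomial.aeval ξ R = lam * (R.coeff i : ℝ) + mu * (R.coeff j : ℝ) := by
      have h7 := hrep (ratPoly R) hRW
      rw [aeval_ratPoly] at h7
      rw [h7, coeff_ratPoly, coeff_ratPoly]
      push_cast
      ring
    have heSrep : Polynomial.aeval ξ S = lam * (S.coeff i : ℝ) + mu * (S.coeff j : ℝ) := by
      have h7 := hrep (ratPoly S) hSW
      rw [aeval_ratPoly] at h7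
      rw [h7, coeff_ratPoly, coeff_ratPoly]
      push_cast
      ring
    have hmuG : mu * (G : ℝ) = (R.coeff i : ℝ) * Polynomial.aeval ξ S
        - (S.coeff i : ℝ) * Polynomial.aeval ξ R := by
      rw [heRrep, heSrep, hG]
      push_cast
      ring
    have hlamG : lam * (G : ℝ) = -((R.coeff j : ℝ) * Polynomial.aeval ξ S
        - (S.coeff j : ℝ) * Polynomial.aeval ξ R) := by
      rw [heRrep, heSrep, hG]
      push_cast
      ring
    have hHRS : (polyHeight R : ℝ) ≤ (polyHeight S : ℝ) := by
      exact_mod_cast le_of_lt (hP.height_lt k hk1)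
    have hevle : |Polynomial.aeval ξ S| ≤ |Polynomial.aeval ξ R| :=
      le_of_lt (hP.eval_lt k hk1)
    have hgen : ∀ a b : ℕ, |(R.coeff a : ℝ) * Polynomial.aeval ξ S
        - (S.coeff a : ℝ) * Polynomial.aeval ξ R|
        ≤ 2 * (polyHeight S : ℝ) * |Polynomial.aeval ξ R| := by
      intro a b
      have h1 := abs_coeff_le_real R a
      have h2 := abs_coeff_le_real S a
      have h3 : |(R.coeff a : ℝ) * Polynomial.aeval ξ S| ≤
          (polyHeight S : ℝ) * |Polynomial.aeval ξ R| := by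
        rw [abs_mul]
        apply mul_le_mul (le_trans h1 hHRS) hevle (abs_nonneg _)
        positivity
      have h4 : |(S.coeff a : ℝ) * Polynomial.aeval ξ R| ≤
          (polyHeight S : ℝ) * |Polynomial.aeval ξ R| := by
        rw [abs_mul]
        apply mul_le_mul h2 le_rfl (abs_nonneg _)
        positivity
      calc |(R.coeff a : ℝ) * Polynomial.aeval ξ S - (S.coeff a : ℝ) * Polynomial.aeval ξ R|
          ≤ |(R.coeff a : ℝ) * Polynomial.aeval ξ S|
            + |(S.coeff a : ℝ) * Polynomial.aeval ξ R| := abs_sub _ _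
        _ ≤ 2 * (polyHeight S : ℝ) * |Polynomial.aeval ξ R| := by linarith
    have hmu2 : |mu| ≤ 2 * (polyHeight S : ℝ) * |Polynomial.aeval ξ R| := by
      have h8 := hgen i i
      have h9 : |mu| * |(G:ℝ)| ≤ 2 * (polyHeight S : ℝ) * |Polynomial.aeval ξ R| := by
        rw [← abs_mul, hmuG]; exact h8
      calc |mu| = |mu| * 1 := (mul_one _).symm
        _ ≤ |mu| * |(G:ℝ)| := mul_le_mul_of_nonneg_left hG1 (abs_nonneg mu)
        _ ≤ _ := h9
    have hlam2 : |lam| ≤ 2 * (polyHeight S : ℝ) * |Polynomial.aeval ξ R| := by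
      have h8 := hgen j j
      have h9 : |lam| * |(G:ℝ)| ≤ 2 * (polyHeight S : ℝ) * |Polynomial.aeval ξ R| := by
        rw [← abs_mul, hlamG, abs_neg]; exact h8
      calc |lam| = |lam| * 1 := (mul_one _).symm
        _ ≤ |lam| * |(G:ℝ)| := mul_le_mul_of_nonneg_left hG1 (abs_nonneg lam)
        _ ≤ _ := h9
    exact max_le hlam2 hmu2
  -- Dirichlet upper bound and contradiction
  set M : ℝ := 1 + |ξ| + ξ^2 with hM
  have hMpos : 0 < M := by positivity
  obtain ⟨N, hN⟩ := exists_nat_gt (16 * M / δ)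
  set k := K + N + 1 with hkdef
  have hk1 : K ≤ k := by omega
  have hHbig : N + 2 ≤ polyHeight (P (k+1)) := by
    have h1 := height_growth hP (K+1) (by omega) (N+1)
    have h2 : K + 1 + (N+1) = k+1 := by omega
    rw [h2] at h1
    have := one_le_height (hP.ne_zero (K+1) (by omega))
    omega
  set Hn : ℕ := polyHeight (P (k+1)) with hHndef
  have hHn2 : 2 ≤ Hn := by omega
  obtain ⟨Q, hQ0, hQd, hQh, hQe⟩ := dirichlet ξ (Hn - 1) (by omega)
  have hcastH : ((Hn - 1 : ℕ) : ℝ) = (Hn : ℝ) - 1 := by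
    rw [Nat.cast_sub (by omega)]
    simp
  have hup : |Polynomial.aeval ξ (P k)| ≤ 2 * M / ((Hn:ℝ) - 1)^2 := by
    have h3 := min_below hξ hP k (by omega) Q hQ0 (le_trans hQd hn) (by omega)
    calc |Polynomial.aeval ξ (P k)| ≤ |Polynomial.aeval ξ Q| := h3
      _ ≤ 2*(1+|ξ|+ξ^2) / ((Hn - 1 : ℕ):ℝ)^2 := hQe
      _ = 2 * M / ((Hn:ℝ) - 1)^2 := by rw [hcastH, hM]
  have hlow := hbound k hk1
  rw [← hHndef] at hlow
  have hHr : (N : ℝ) + 2 ≤ (Hn : ℝ) := by exact_mod_cast hHbig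
  have hHgt : 16 * M / δ < (Hn : ℝ) := by
    calc 16 * M / δ < N := hN
      _ ≤ (Hn:ℝ) := by linarith
  have hsq : ((Hn:ℝ))^2 / 4 ≤ ((Hn:ℝ) - 1)^2 := by nlinarith
  have hfin1 : δ ≤ 16 * M / (Hn:ℝ) := by
    have hHpos : (0:ℝ) < Hn := by linarith
    have h5 : 2 * (Hn:ℝ) * |Polynomial.aeval ξ (P k)| ≤ 2 * (Hn:ℝ) * (2 * M / ((Hn:ℝ)-1)^2) := by
      apply mul_le_mul_of_nonneg_left hup (by positivity)
    have h6 : 2 * (Hn:ℝ) * (2 * M / ((Hn:ℝ)-1)^2) ≤ 2 * (Hn:ℝ) * (2 * M / ((Hn:ℝ)^2/4)) := by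
      apply mul_le_mul_of_nonneg_left _ (by positivity)
      apply div_le_div_of_nonneg_left (by positivity) (by positivity) hsq
    have h7 : 2 * (Hn:ℝ) * (2 * M / ((Hn:ℝ)^2/4)) = 16 * M / (Hn:ℝ) := by
      field_simp
      ring
    linarith
  have hfin2 : 16 * M / (Hn:ℝ) < δ := by
    rw [div_lt_iff₀ (by linarith : (0:ℝ) < (Hn:ℝ))]
    rw [div_lt_iff₀ hδpos] at hHgt
    linarith
  linarith


set_option maxHeartbeats 1000000 in
/-- no two-dimensional subspace of the polynomials of degree at most `n`
contains `P_k` for all large `k`; consequently there are infinitely many good `k ≥ 2`. -/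
theorem stmt16 (n : ℕ) (hn : 2 ≤ n) (ξ : ℝ) (hξ : Transcendental ℚ ξ)
    (P : ℕ → Polynomial ℤ) (hP : IsBestApproxSeq n ξ P) :
    (¬ ∃ W : Submodule ℚ (Polynomial ℚ), Module.finrank ℚ W = 2 ∧
        W ≤ Polynomial.degreeLE ℚ ((n : ℕ) : WithBot ℕ) ∧
        ∀ᶠ k in Filter.atTop, ratPoly (P k) ∈ W) ∧
    {k : ℕ | 2 ≤ k ∧ Good P k}.Infinite := by
  have part1 := no_two_dim n hn ξ hξ P hP
  refine ⟨part1, ?_⟩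
  intro hfin
  obtain ⟨K0, hK0⟩ := hfin.bddAbove
  set K := K0 + 2 with hKdef
  have hnotgood : ∀ k, K ≤ k → ¬ Good P k := by
    intro k hk hg
    have hmem : k ∈ {k : ℕ | 2 ≤ k ∧ Good P k} := ⟨by omega, hg⟩
    have := hK0 hmem
    omega
  set W := Submodule.span ℚ ({ratPoly (P (K-1)), ratPoly (P K)} : Set (Polynomial ℚ)) with hWdef
  have hKm1 : 1 ≤ K - 1 := by omega
  have hKsucc : K - 1 + 1 = K := by omega
  have hindep0 : LinearIndependent ℚ ![ratPoly (P (K-1)), ratPoly (P K)] := by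
    have := consec_indep hξ hP (K-1) hKm1
    rwa [hKsucc] at this
  haveI : FiniteDimensional ℚ W := FiniteDimensional.span_of_finite ℚ (Set.toFinite _)
  have hWrank : Module.finrank ℚ W = 2 := finrank_span_pair hindep0
  have hmem : ∀ m : ℕ, Submodule.span ℚ
      ({ratPoly (P (K-1+m)), ratPoly (P (K+m))} : Set (Polynomial ℚ)) = W := by
    intro m
    induction m with
    | zero => simp [hWdef]
    | succ m ih =>
        have hkm1 : 1 ≤ K - 1 + m := by omega
        have e1 : K - 1 + m + 1 = K + m := by omega
        have hcons : LinearIndependent ℚ ![ratPoly (P (K+m)), ratPoly (P (K+m+1))] :=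
          consec_indep hξ hP (K+m) (by omega)
        have hng := hnotgood (K+m) (by omega)
        rw [Good] at hng
        have e2 : K + m - 1 = K - 1 + m := by omega
        rw [e2] at hng
        obtain ⟨g, hsum, i0, hi0⟩ := Fintype.not_linearIndependent_iff.1 hng
        have hsum' : g 0 • ratPoly (P (K-1+m)) + g 1 • ratPoly (P (K+m))
            + g 2 • ratPoly (P (K+m+1)) = 0 := by
          simpa [Fin.sum_univ_three] using hsum
        have hg2 : g 2 ≠ 0 := by
          intro hz
          rw [hz, zero_smul, add_zero] at hsum'
          have hpair := consec_indep hξ hP (K-1+m) hkm1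
          rw [e1] at hpair
          have h01 := LinearIndependent.pair_iff.1 hpair (g 0) (g 1) hsum'
          fin_cases i0 <;> simp_all
        have hzmem : ratPoly (P (K+m+1)) ∈ Submodule.span ℚ
            ({ratPoly (P (K-1+m)), ratPoly (P (K+m))} : Set (Polynomial ℚ)) := by
          have h9 : g 2 • ratPoly (P (K+m+1))
              = -(g 0 • ratPoly (P (K-1+m)) + g 1 • ratPoly (P (K+m))) :=
            eq_neg_of_add_eq_zero_right hsum'
          have h10 : ratPoly (P (K+m+1)) = (g 2)⁻¹ •
              -(g 0 • ratPoly (P (K-1+m)) + g 1 • ratPoly (P (K+m))) := by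
            rw [← h9, smul_smul, inv_mul_cancel₀ hg2, one_smul]
          rw [h10]
          apply Submodule.smul_mem
          apply Submodule.neg_mem
          exact Submodule.add_mem _
            (Submodule.smul_mem _ _ (Submodule.subset_span (by simp)))
            (Submodule.smul_mem _ _ (Submodule.subset_span (by simp)))
        rw [ih] at hzmem
        have hmem2 : ratPoly (P (K+m)) ∈ W := by
          rw [← ih]; exact Submodule.subset_span (by simp)
        have e3 : K - 1 + (m+1) = K + m := by omega
        have e4 : K + (m+1) = K + m + 1 := by omega
        rw [e3, e4]
        apply Submodule.eq_of_le_of_finrank_le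
        · rw [Submodule.span_le]
          rintro z (rfl | rfl)
          · exact hmem2
          · exact hzmem
        · rw [hWrank, finrank_span_pair hcons]
  apply part1
  have hdeg : ∀ m, 1 ≤ m → (ratPoly (P m)).degree ≤ ((n : ℕ) : WithBot ℕ) := by
    intro m hm
    have h1 : (ratPoly (P m)).degree = (P m).degree :=
      Polynomial.degree_map_eq_of_injective (Int.cast_injective (α := ℚ)) (P m)
    rw [h1]
    exact Polynomial.degree_le_of_natDegree_le (hP.deg_le m hm)
  refine ⟨W, hWrank, ?_, ?_⟩
  · rw [hWdef, Submodule.span_le]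
    rintro z (rfl | rfl)
    · rw [SetLike.mem_coe, Polynomial.mem_degreeLE]; exact hdeg (K-1) hKm1
    · rw [SetLike.mem_coe, Polynomial.mem_degreeLE]; exact hdeg K (by omega)
  · rw [Filter.eventually_atTop]
    refine ⟨K, fun k hk => ?_⟩
    have h5 := hmem (k - K)
    have e5 : K + (k - K) = k := by omega
    rw [e5] at h5
    rw [← h5]
    exact Submodule.subset_span (by simp)
end
end

section
/- For every integer n ≥ 2, the quartic polynomial Q_n(T) = T⁴ + (4−4n)T³ + (5n²−12n+8)T² + (−2n³+11n²−18n+7)T + (−2n³+6n²−4n) has four distinct real roots; exactly one of these roots lies in the open interval (2n−2, 2n−1), and it is the largest root of Q_n. -/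
open Polynomial Filter

noncomputable section

/-- `Q_n` has four distinct real roots, exactly one of which lies in
`(2n-2, 2n-1)`, and it is the largest. -/
theorem stmt17 (n : ℕ) (hn : 2 ≤ n) :
    ∃ r1 r2 r3 r4 : ℝ, r1 < r2 ∧ r2 < r3 ∧ r3 < r4 ∧
      (∀ x : ℝ, x^4 + (4-4*(n:ℝ))*x^3 + (5*(n:ℝ)^2-12*(n:ℝ)+8)*x^2
          + (-2*(n:ℝ)^3+11*(n:ℝ)^2-18*(n:ℝ)+7)*x + (-2*(n:ℝ)^3+6*(n:ℝ)^2-4*(n:ℝ)) = 0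
        ↔ (x = r1 ∨ x = r2 ∨ x = r3 ∨ x = r4)) ∧
      r4 ∈ Set.Ioo (2*(n:ℝ)-2) (2*(n:ℝ)-1) ∧
      r1 ∉ Set.Ioo (2*(n:ℝ)-2) (2*(n:ℝ)-1) ∧
      r2 ∉ Set.Ioo (2*(n:ℝ)-2) (2*(n:ℝ)-1) ∧
      r3 ∉ Set.Ioo (2*(n:ℝ)-2) (2*(n:ℝ)-1) := by
  set N : ℝ := (n : ℝ) with hNdef
  have hN : (2:ℝ) ≤ N := by rw [hNdef]; exact_mod_cast hn
  set f : ℝ → ℝ := fun x => x^4 + (4-4*N)*x^3 + (5*N^2-12*N+8)*x^2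
      + (-2*N^3+11*N^2-18*N+7)*x + (-2*N^3+6*N^2-4*N) with hfdef
  have hcont : Continuous f := by fun_prop
  -- sign facts
  have h0 : 0 < f (-1) := by simp only [hfdef]; nlinarith
  have h1 : f (1/4) < 0 := by
    simp only [hfdef]
    nlinarith [sq_nonneg (N-2), sq_nonneg N, mul_nonneg (sub_nonneg.2 hN) (sq_nonneg (N-2))]
  have h2 : 0 < f (N - 3/2) := by
    rcases eq_or_lt_of_le hN with h | h
    · simp only [hfdef, ← h]; norm_num
    · have h3N : (3:ℝ) ≤ N := by
        rw [hNdef] at h ⊢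
        have h' : 2 < n := by exact_mod_cast h
        have h'' : 3 ≤ n := h'
        exact_mod_cast h''
      simp only [hfdef]
      nlinarith [sq_nonneg (N-3), mul_nonneg (sub_nonneg.2 h3N) (sq_nonneg (N-3))]
  have h3 : f (2*N-2) < 0 := by
    have : f (2*N-2) = 2 - 2*N := by simp only [hfdef]; ring
    rw [this]; linarith
  have h4 : 0 < f (2*N-1) := by
    have : f (2*N-1) = 2*N^3-4*N^2+4*N-2 := by simp only [hfdef]; ring
    rw [this]; nlinarith
  -- extract roots via IVT
  have m01 : (-1:ℝ) ≤ 1/4 := by norm_num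
  have m12 : (1/4:ℝ) ≤ N - 3/2 := by linarith
  have m23 : N - 3/2 ≤ 2*N - 2 := by linarith
  have m34 : 2*N - 2 ≤ 2*N - 1 := by linarith
  obtain ⟨r1, hr1mem, hf1⟩ :=
    intermediate_value_Ioo' m01 hcont.continuousOn (Set.mem_Ioo.2 ⟨h1, h0⟩)
  obtain ⟨r2, hr2mem, hf2⟩ :=
    intermediate_value_Ioo m12 hcont.continuousOn (Set.mem_Ioo.2 ⟨h1, h2⟩)
  obtain ⟨r3, hr3mem, hf3⟩ :=
    intermediate_value_Ioo' m23 hcont.continuousOn (Set.mem_Ioo.2 ⟨h3, h2⟩)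
  obtain ⟨r4, hr4mem, hf4⟩ :=
    intermediate_value_Ioo m34 hcont.continuousOn (Set.mem_Ioo.2 ⟨h3, h4⟩)
  have hlt12 : r1 < r2 := hr1mem.2.trans hr2mem.1
  have hlt23 : r2 < r3 := hr2mem.2.trans hr3mem.1
  have hlt34 : r3 < r4 := hr3mem.2.trans hr4mem.1
  -- polynomial with these coefficients
  set P : Polynomial ℝ := X^4 + C (4-4*N)*X^3 + C (5*N^2-12*N+8)*X^2
      + C (-2*N^3+11*N^2-18*N+7)*X + C (-2*N^3+6*N^2-4*N) with hPdef
  have hPeval : ∀ x : ℝ, P.eval x = f x := by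
    intro x
    simp only [hPdef, hfdef, eval_add, eval_mul, eval_pow, eval_C, eval_X]
  have hPdeg : P.natDegree = 4 := by rw [hPdef]; compute_degree!
  have hPne : P ≠ 0 := by
    intro h
    rw [h] at hPdeg
    simp at hPdeg
  have key : ∀ x : ℝ, f x = 0 → x = r1 ∨ x = r2 ∨ x = r3 ∨ x = r4 := by
    intro x hx
    by_contra hcon
    push_neg at hcon
    obtain ⟨hx1, hx2, hx3, hx4⟩ := hcon
    have hsub : ({x, r1, r2, r3, r4} : Finset ℝ) ⊆ P.roots.toFinset := by
      intro y hy
      rw [Multiset.mem_toFinset, Polynomial.mem_roots hPne]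
      simp only [Finset.mem_insert, Finset.mem_singleton] at hy
      rcases hy with rfl | rfl | rfl | rfl | rfl <;>
        simp [Polynomial.IsRoot, hPeval, hx, hf1, hf2, hf3, hf4]
    have hcard : ({x, r1, r2, r3, r4} : Finset ℝ).card = 5 := by
      rw [Finset.card_insert_of_notMem (by simp [hx1, hx2, hx3, hx4]),
          Finset.card_insert_of_notMem (by simp [hlt12.ne, (hlt12.trans hlt23).ne,
            (hlt12.trans (hlt23.trans hlt34)).ne]),
          Finset.card_insert_of_notMem (by simp [hlt23.ne, (hlt23.trans hlt34).ne]),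
          Finset.card_insert_of_notMem (by simp [hlt34.ne]),
          Finset.card_singleton]
    have hle1 := Finset.card_le_card hsub
    have hle2 : P.roots.toFinset.card ≤ Multiset.card P.roots := Multiset.toFinset_card_le _
    have hle3 := P.card_roots'
    rw [hcard] at hle1
    omega
  refine ⟨r1, r2, r3, r4, hlt12, hlt23, hlt34, ?_, ?_, ?_, ?_, ?_⟩
  · intro x
    constructor
    · intro hx
      exact key x (by rw [hfdef]; exact hx)
    · rintro (rfl | rfl | rfl | rfl)
      · have := hf1; rw [hfdef] at this; exact this
      · have := hf2; rw [hfdef] at this; exact this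
      · have := hf3; rw [hfdef] at this; exact this
      · have := hf4; rw [hfdef] at this; exact this
  · exact hr4mem
  · rintro ⟨ha, -⟩
    have : r1 < 2*N - 2 := by linarith [hr1mem.2]
    linarith
  · rintro ⟨ha, -⟩
    have : r2 < 2*N - 2 := by linarith [hr2mem.2]
    linarith
  · rintro ⟨ha, -⟩
    linarith [hr3mem.2]
end
end

section
/- For every integer n ≥ 2, the cubic polynomial R_n(T) = T³ − (4n−4)T² + (5n²−11n+6)T + (−2n³+8n²−10n+3) has three real roots; exactly one of these roots lies in the open interval (2n−2, 2n−1), and it is the largest root of R_n. -/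
open Polynomial Filter

noncomputable section

/-- A monic cubic cannot have four distinct real roots. -/
lemma cubic_not_four_roots (a b c x1 x2 x3 x4 : ℝ)
    (h12 : x1 ≠ x2) (h13 : x1 ≠ x3) (h14 : x1 ≠ x4)
    (h23 : x2 ≠ x3) (h24 : x2 ≠ x4) (h34 : x3 ≠ x4)
    (e1 : x1^3 + a*x1^2 + b*x1 + c = 0)
    (e2 : x2^3 + a*x2^2 + b*x2 + c = 0)
    (e3 : x3^3 + a*x3^2 + b*x3 + c = 0)
    (e4 : x4^3 + a*x4^2 + b*x4 + c = 0) : False := by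
  have S12 : x1^2 + x1*x2 + x2^2 + a*(x1+x2) + b = 0 := by
    have h : (x1 - x2) * (x1^2 + x1*x2 + x2^2 + a*(x1+x2) + b) = 0 := by
      linear_combination e1 - e2
    rcases mul_eq_zero.mp h with h | h
    · exact absurd (sub_eq_zero.mp h) h12
    · exact h
  have S13 : x1^2 + x1*x3 + x3^2 + a*(x1+x3) + b = 0 := by
    have h : (x1 - x3) * (x1^2 + x1*x3 + x3^2 + a*(x1+x3) + b) = 0 := by
      linear_combination e1 - e3
    rcases mul_eq_zero.mp h with h | h
    · exact absurd (sub_eq_zero.mp h) h13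
    · exact h
  have S14 : x1^2 + x1*x4 + x4^2 + a*(x1+x4) + b = 0 := by
    have h : (x1 - x4) * (x1^2 + x1*x4 + x4^2 + a*(x1+x4) + b) = 0 := by
      linear_combination e1 - e4
    rcases mul_eq_zero.mp h with h | h
    · exact absurd (sub_eq_zero.mp h) h14
    · exact h
  have T123 : x1 + x2 + x3 + a = 0 := by
    have h : (x2 - x3) * (x1 + x2 + x3 + a) = 0 := by linear_combination S12 - S13
    rcases mul_eq_zero.mp h with h | h
    · exact absurd (sub_eq_zero.mp h) h23
    · exact h
  have T124 : x1 + x2 + x4 + a = 0 := by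
    have h : (x2 - x4) * (x1 + x2 + x4 + a) = 0 := by linear_combination S12 - S14
    rcases mul_eq_zero.mp h with h | h
    · exact absurd (sub_eq_zero.mp h) h24
    · exact h
  exact h34 (by linarith)

/-- `R_n` has three real roots, exactly one of which lies in
`(2n-2, 2n-1)`, and it is the largest. -/
theorem stmt18 (n : ℕ) (hn : 2 ≤ n) :
    ∃ r1 r2 r3 : ℝ, r1 < r2 ∧ r2 < r3 ∧
      (∀ x : ℝ, x^3 - (4*(n:ℝ)-4)*x^2 + (5*(n:ℝ)^2-11*(n:ℝ)+6)*x
          + (-2*(n:ℝ)^3+8*(n:ℝ)^2-10*(n:ℝ)+3) = 0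
        ↔ (x = r1 ∨ x = r2 ∨ x = r3)) ∧
      r3 ∈ Set.Ioo (2*(n:ℝ)-2) (2*(n:ℝ)-1) ∧
      r1 ∉ Set.Ioo (2*(n:ℝ)-2) (2*(n:ℝ)-1) ∧
      r2 ∉ Set.Ioo (2*(n:ℝ)-2) (2*(n:ℝ)-1) := by
  set N : ℝ := (n : ℝ) with hNdef
  have hN : (2:ℝ) ≤ N := by rw [hNdef]; exact_mod_cast hn
  set f : ℝ → ℝ := fun x => x^3 - (4*N-4)*x^2 + (5*N^2-11*N+6)*x
      + (-2*N^3+8*N^2-10*N+3) with hf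
  have hcont : Continuous f := by fun_prop
  have hf0 : f 0 < 0 := by
    simp only [hf]
    nlinarith [sq_nonneg (N-2), sq_nonneg N, pow_le_pow_left₀ (by norm_num : (0:ℝ) ≤ 2) hN 3]
  have hfb : 0 < f (N - 3/2) := by
    simp only [hf]; nlinarith [sq_nonneg (N-2)]
  have hfc : f (2*N - 2) < 0 := by
    simp only [hf]; nlinarith [sq_nonneg (N-2)]
  have hfd : 0 < f (2*N - 1) := by
    simp only [hf]; nlinarith [sq_nonneg (N-2)]
  have hord1 : (0:ℝ) < N - 3/2 := by linarith
  have hord2 : N - 3/2 < 2*N - 2 := by linarith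
  have hord3 : 2*N - 2 < 2*N - 1 := by linarith
  have ivt : ∀ u v : ℝ, u ≤ v → f u < 0 → 0 < f v → ∃ r ∈ Set.Ioo u v, f r = 0 := by
    intro u v huv hu hv
    have := intermediate_value_Ioo huv hcont.continuousOn
      (Set.mem_Ioo.mpr ⟨hu, hv⟩)
    obtain ⟨r, hr, hr0⟩ := this
    exact ⟨r, hr, hr0⟩
  obtain ⟨r1, hr1mem, hr1⟩ := ivt 0 (N - 3/2) (by linarith) hf0 hfb
  obtain ⟨r2, hr2mem, hr2⟩ := by
    have : ∃ r ∈ Set.Ioo (N - 3/2) (2*N - 2), f r = 0 := by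
      have := intermediate_value_Ioo' (by linarith : N - 3/2 ≤ 2*N - 2)
        hcont.continuousOn (Set.mem_Ioo.mpr ⟨hfc, hfb⟩)
      obtain ⟨r, hr, hr0⟩ := this
      exact ⟨r, hr, hr0⟩
    exact this
  obtain ⟨r3, hr3mem, hr3⟩ := ivt (2*N - 2) (2*N - 1) (by linarith) hfc hfd
  refine ⟨r1, r2, r3, by linarith [hr1mem.2, hr2mem.1], by linarith [hr2mem.2, hr3mem.1],
    ?_, ?_, ?_, ?_⟩
  · intro x
    constructor
    · intro hx
      by_contra hcon
      push_neg at hcon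
      obtain ⟨hx1, hx2, hx3⟩ := hcon
      have hd12 : r1 ≠ r2 := by intro h; rw [h] at hr1mem; linarith [hr1mem.2, hr2mem.1]
      have hd13 : r1 ≠ r3 := by intro h; rw [h] at hr1mem; linarith [hr1mem.2, hr3mem.1]
      have hd23 : r2 ≠ r3 := by intro h; rw [h] at hr2mem; linarith [hr2mem.2, hr3mem.1]
      exact cubic_not_four_roots (-(4*N-4)) (5*N^2-11*N+6) (-2*N^3+8*N^2-10*N+3)
        x r1 r2 r3 hx1 hx2 hx3 hd12 hd13 hd23
        (by linear_combination hx) (by linear_combination hr1)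
        (by linear_combination hr2) (by linear_combination hr3)
    · rintro (rfl | rfl | rfl)
      · linear_combination hr1
      · linear_combination hr2
      · linear_combination hr3
  · exact hr3mem
  · intro h
    have := h.1
    linarith [hr1mem.2]
  · intro h
    have := h.1
    linarith [hr2mem.2]
end
end

section
/- Let n ≥ 1 be an integer and ξ a real number that is not algebraic of degree at most n. Then, as elements of the extended reals, ŵ_n(ξ) = liminf_{k→∞} μ_k and w_n(ξ) = limsup_{k→∞} v_k. -/
open Polynomial Filter

noncomputable section

/-!
If `H_k ≤ X < H_{k+1}`, then `P_k` minimizes `|P(ξ)|` among the nonzero polynomials of degree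
at most `n` and height at most `X`, so every such polynomial of height below `H_{k+1}` satisfies
`|Q(ξ)| ≥ |P_k(ξ)|`. Hence a uniform exponent `w` gives `|P_{k-1}(ξ)| ≤ H_k^{-w}` (let `X` increase
to `H_k`), that is `μ_k ≥ w`; conversely, if `μ_k > c` for all large `k`, then `P_k` is a witness
for `c` at every `X ∈ [H_k, H_{k+1})`. In the same way a polynomial `Q` with
`|Q(ξ)| < H(Q)^{-w}` yields `v_k > w` for the `k` with `H_k ≤ H(Q) < H_{k+1}`, while the `P_k`
with `v_k > c` are themselves infinitely many such polynomials for `c`.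
-/

lemma EReal.sSup_coe_image_eq_liminf {α : Type*} {l : Filter α} {S : Set ℝ} {u : α → ℝ}
    (hle : ∀ w ∈ S, ∀ᶠ a in l, w ≤ u a) (hmem : ∀ c : ℝ, (∀ᶠ a in l, c < u a) → c ∈ S) :
    sSup ((fun w : ℝ => (w : EReal)) '' S) = liminf (fun a => (u a : EReal)) l := by
  refine le_antisymm (sSup_le ?_) (EReal.ge_of_forall_gt_iff_ge.1 fun c hc => ?_)
  · rintro _ ⟨w, hw, rfl⟩
    exact le_liminf_of_le (by isBoundedDefault)
      ((hle w hw).mono fun _ h => EReal.coe_le_coe_iff.2 h)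
  · refine le_sSup ⟨c, hmem c ?_, rfl⟩
    exact (eventually_lt_of_lt_liminf hc).mono fun _ h => EReal.coe_lt_coe_iff.1 h

lemma EReal.sSup_coe_image_eq_limsup {α : Type*} {l : Filter α} {S : Set ℝ} {u : α → ℝ}
    (hle : ∀ w ∈ S, ∃ᶠ a in l, w ≤ u a) (hmem : ∀ c : ℝ, (∃ᶠ a in l, c < u a) → c ∈ S) :
    sSup ((fun w : ℝ => (w : EReal)) '' S) = limsup (fun a => (u a : EReal)) l := by
  refine le_antisymm (sSup_le ?_) (EReal.ge_of_forall_gt_iff_ge.1 fun c hc => ?_)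
  · rintro _ ⟨w, hw, rfl⟩
    exact le_limsup_of_frequently_le' ((hle w hw).mono fun _ h => EReal.coe_le_coe_iff.2 h)
  · refine le_sSup ⟨c, hmem c ?_, rfl⟩
    exact (frequently_lt_of_lt_limsup (by isBoundedDefault) hc).mono
      fun _ h => EReal.coe_lt_coe_iff.1 h

lemma le_neg_log_div_log_iff {A H w : ℝ} (hA : 0 < A) (hH : 1 < H) :
    w ≤ -Real.log A / Real.log H ↔ A ≤ H ^ (-w) := by
  rw [le_div_iff₀ (Real.log_pos hH), Real.le_rpow_iff_log_le hA (by linarith)]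
  constructor <;> intro h <;> linarith

lemma lt_neg_log_div_log_iff {A H w : ℝ} (hA : 0 < A) (hH : 1 < H) :
    w < -Real.log A / Real.log H ↔ A < H ^ (-w) := by
  rw [lt_div_iff₀ (Real.log_pos hH), Real.lt_rpow_iff_log_lt hA (by linarith)]
  constructor <;> intro h <;> linarith

lemma lt_rpow_neg_of_le {A X H w : ℝ} (hX : 1 ≤ X) (hXH : X ≤ H) (hA : A < 1)
    (hAH : A < H ^ (-w)) : A < X ^ (-w) := by
  rcases le_or_gt 0 w with hw | hw
  · exact hAH.trans_le (Real.rpow_le_rpow_of_nonpos (by linarith) hXH (by linarith))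
  · exact hA.trans_le (Real.one_le_rpow hX (by linarith))

lemma exists_le_lt_succ_of_tendsto_atTop {f : ℕ → ℝ} (hf : Tendsto f atTop atTop) {N : ℕ}
    {x : ℝ} (hN : f N ≤ x) : ∃ k, N ≤ k ∧ f k ≤ x ∧ x < f (k + 1) := by
  by_contra! h
  obtain ⟨m, hNm, hm⟩ := ((eventually_ge_atTop N).and (hf.eventually_gt_atTop x)).exists
  have hle : ∀ k, N ≤ k → f k ≤ x := fun k hk => by
    induction k, hk using Nat.le_induction with
    | base => exact hN
    | succ k hk ih => exact h k hk ih
  exact (hle m hNm).not_gt hm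

lemma natAbs_coeff_le_polyHeight (Q : ℤ[X]) (i : ℕ) : (Q.coeff i).natAbs ≤ polyHeight Q := by
  by_cases hi : i ∈ Q.support
  · exact Finset.le_sup (f := fun i => (Q.coeff i).natAbs) hi
  · simp [notMem_support_iff.1 hi]

lemma one_le_polyHeight {Q : ℤ[X]} (hQ : Q ≠ 0) : 1 ≤ polyHeight Q :=
  (Int.natAbs_pos.2 (leadingCoeff_ne_zero.2 hQ)).trans_le (natAbs_coeff_le_polyHeight Q _)

lemma polyHeight_neg_s19 (Q : ℤ[X]) : polyHeight (-Q) = polyHeight Q := by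
  simp [polyHeight]

lemma finite_setOf_natDegree_le_polyHeight_le (n B : ℕ) :
    {Q : ℤ[X] | Q.natDegree ≤ n ∧ polyHeight Q ≤ B}.Finite := by
  let coeffs : ℤ[X] → Fin (n + 1) → ℤ := fun Q i => Q.coeff i
  refine Set.Finite.of_finite_image (f := coeffs) ?_ fun Q₁ hQ₁ Q₂ hQ₂ h => ?_
  · refine (Set.Finite.pi fun _ => Set.finite_Icc (-(B : ℤ)) B).subset ?_
    rintro _ ⟨Q, ⟨-, hQB⟩, rfl⟩ i -
    have := (natAbs_coeff_le_polyHeight Q i).trans hQB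
    simp only [coeffs, Set.mem_Icc]
    omega
  · ext i
    by_cases hi : i ≤ n
    · exact congrFun h ⟨i, by omega⟩
    · rw [coeff_eq_zero_of_natDegree_lt (by linarith [hQ₁.1]),
        coeff_eq_zero_of_natDegree_lt (by linarith [hQ₂.1])]

namespace IsBestApproxSeq

open Topology

variable {n : ℕ} {ξ : ℝ} {P : ℕ → ℤ[X]}

lemma strictMonoOn_polyHeight (hP : IsBestApproxSeq n ξ P) :
    StrictMonoOn (fun k => polyHeight (P k)) (Set.Ici 1) :=
  strictMonoOn_of_lt_add_one Set.ordConnected_Ici fun k _ hk _ => hP.height_lt k hk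

lemma strictAntiOn_abs_aeval (hP : IsBestApproxSeq n ξ P) :
    StrictAntiOn (fun k => |aeval ξ (P k)|) (Set.Ici 1) :=
  strictAntiOn_of_add_one_lt Set.ordConnected_Ici fun k _ hk _ => hP.eval_lt k hk

lemma le_polyHeight (hP : IsBestApproxSeq n ξ P) {k : ℕ} (hk : 1 ≤ k) :
    k ≤ polyHeight (P k) := by
  induction k, hk using Nat.le_induction with
  | base => exact one_le_polyHeight (hP.ne_zero 1 le_rfl)
  | succ k hk ih => exact ih.trans_lt (hP.height_lt k hk)

lemma one_lt_polyHeight (hP : IsBestApproxSeq n ξ P) {k : ℕ} (hk : 2 ≤ k) :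
    1 < (polyHeight (P k) : ℝ) := by
  have := hP.le_polyHeight (k := k) (by omega)
  exact_mod_cast (by omega : 1 < polyHeight (P k))

lemma tendsto_polyHeight (hP : IsBestApproxSeq n ξ P) :
    Tendsto (fun k => (polyHeight (P k) : ℝ)) atTop atTop :=
  tendsto_atTop_mono' _ ((eventually_ge_atTop 1).mono fun k hk =>
    show (k : ℝ) ≤ polyHeight (P k) by exact_mod_cast hP.le_polyHeight hk)
    tendsto_natCast_atTop_atTop

lemma abs_aeval_pos (hP : IsBestApproxSeq n ξ P)
    (hξ : ¬ ∃ Q : ℤ[X], Q ≠ 0 ∧ Q.natDegree ≤ n ∧ aeval ξ Q = 0) {k : ℕ} (hk : 1 ≤ k) :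
    0 < |aeval ξ (P k)| :=
  abs_pos.2 fun h => hξ ⟨P k, hP.ne_zero k hk, hP.deg_le k hk, h⟩

/-- By completeness of the sequence, a minimizer of `|R(ξ)|` over heights `≤ H(Q)` is some
`±P_m`, and `m ≤ k` because `H_m ≤ H(Q) < H_{k+1}`. -/
lemma abs_aeval_le_of_polyHeight_lt (hP : IsBestApproxSeq n ξ P) {k : ℕ} (hk : 1 ≤ k)
    {Q : ℤ[X]} (hQ : Q ≠ 0) (hQn : Q.natDegree ≤ n)
    (hQH : polyHeight Q < polyHeight (P (k + 1))) :
    |aeval ξ (P k)| ≤ |aeval ξ Q| := by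
  obtain ⟨R, ⟨hR0, hRn, hRQ⟩, hRmin⟩ := Set.exists_min_image
    {R : ℤ[X] | R ≠ 0 ∧ R.natDegree ≤ n ∧ polyHeight R ≤ polyHeight Q} (fun R => |aeval ξ R|)
    ((finite_setOf_natDegree_le_polyHeight_le n _).subset fun R hR => ⟨hR.2.1, hR.2.2⟩)
    ⟨Q, hQ, hQn, le_rfl⟩
  obtain ⟨m, hm, hRm⟩ :=
    hP.complete R hR0 hRn fun S hS0 hSn hSR => hRmin S ⟨hS0, hSn, hSR.trans hRQ⟩
  obtain ⟨hHm, hAm⟩ : polyHeight (P m) = polyHeight R ∧ |aeval ξ (P m)| = |aeval ξ R| := by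
    rcases hRm with rfl | rfl <;> simp [polyHeight_neg_s19]
  have hmk : m ≤ k := by
    by_contra! h
    have : polyHeight (P (k + 1)) ≤ polyHeight (P m) :=
      (hP.strictMonoOn_polyHeight.le_iff_le (Set.mem_Ici.2 (by omega)) (Set.mem_Ici.2 hm)).2 h
    omega
  calc |aeval ξ (P k)| ≤ |aeval ξ (P m)| :=
        (hP.strictAntiOn_abs_aeval.le_iff_ge (Set.mem_Ici.2 hk) (Set.mem_Ici.2 hm)).2 hmk
    _ = |aeval ξ R| := hAm
    _ ≤ |aeval ξ Q| := hRmin Q ⟨hQ, hQn, le_rfl⟩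

lemma eventually_abs_aeval_lt_one (hP : IsBestApproxSeq n ξ P) (hn : 1 ≤ n) :
    ∀ᶠ k in atTop, |aeval ξ (P k)| < 1 := by
  let Q : ℤ[X] := X - C ⌊ξ⌋
  have hQ : |aeval ξ Q| < 1 := by
    simpa [Q, Int.self_sub_floor, abs_of_nonneg (Int.fract_nonneg ξ)] using Int.fract_lt_one ξ
  filter_upwards [eventually_ge_atTop (max 1 (polyHeight Q))] with k hk
  have hk1 : 1 ≤ k := le_of_max_le_left hk
  refine (hP.isMin k hk1 Q (X_sub_C_ne_zero _) (by rwa [natDegree_X_sub_C]) ?_).trans_lt hQ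
  exact (le_of_max_le_right hk).trans (hP.le_polyHeight hk1)

lemma eventually_le_muk (hP : IsBestApproxSeq n ξ P)
    (hξ : ¬ ∃ Q : ℤ[X], Q ≠ 0 ∧ Q.natDegree ≤ n ∧ aeval ξ Q = 0) {w : ℝ}
    (hw : w ∈ uniformExpSet n ξ) : ∀ᶠ k in atTop, w ≤ muk ξ P k := by
  obtain ⟨X₀, hX₀⟩ := eventually_atTop.1 hw
  filter_upwards [eventually_ge_atTop 2, hP.tendsto_polyHeight.eventually_gt_atTop X₀]
    with k hk hkX₀
  obtain ⟨j, rfl⟩ : ∃ j, k = j + 1 := ⟨k - 1, by omega⟩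
  have hH := hP.one_lt_polyHeight hk
  rw [muk, Nat.add_sub_cancel, le_neg_log_div_log_iff (hP.abs_aeval_pos hξ (by omega)) hH]
  have hcont : Tendsto (fun X : ℝ => X ^ (-w)) (𝓝[<] (polyHeight (P (j + 1)) : ℝ))
      (𝓝 ((polyHeight (P (j + 1)) : ℝ) ^ (-w))) :=
    (Real.continuousAt_rpow_const _ _ (Or.inl (by positivity))).tendsto.mono_left
      nhdsWithin_le_nhds
  refine ge_of_tendsto hcont ?_
  filter_upwards [Ioo_mem_nhdsLT hkX₀] with X ⟨hX₀X, hXH⟩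
  obtain ⟨Q, hQn, hQX, hQ0, hQw⟩ := hX₀ X hX₀X.le
  have hQH : polyHeight Q < polyHeight (P (j + 1)) := by exact_mod_cast hQX.trans_lt hXH
  exact (hP.abs_aeval_le_of_polyHeight_lt (by omega) (by rintro rfl; simp at hQ0) hQn hQH).trans
    hQw.le

lemma mem_uniformExpSet_of_eventually_lt_muk (hP : IsBestApproxSeq n ξ P) (hn : 1 ≤ n)
    (hξ : ¬ ∃ Q : ℤ[X], Q ≠ 0 ∧ Q.natDegree ≤ n ∧ aeval ξ Q = 0) {c : ℝ}
    (hc : ∀ᶠ k in atTop, c < muk ξ P k) : c ∈ uniformExpSet n ξ := by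
  have h : ∀ᶠ k in atTop, 1 ≤ k ∧ |aeval ξ (P k)| < 1 ∧
      |aeval ξ (P k)| < (polyHeight (P (k + 1)) : ℝ) ^ (-c) := by
    filter_upwards [eventually_ge_atTop 1, hP.eventually_abs_aeval_lt_one hn,
      (tendsto_add_atTop_nat 1).eventually hc] with k hk hk1 hck
    rw [muk, Nat.add_sub_cancel, lt_neg_log_div_log_iff (hP.abs_aeval_pos hξ hk)
      (hP.one_lt_polyHeight (by omega))] at hck
    exact ⟨hk, hk1, hck⟩
  obtain ⟨N, hN⟩ := eventually_atTop.1 h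
  filter_upwards [eventually_ge_atTop (polyHeight (P N) : ℝ)] with X hX
  obtain ⟨k, hNk, hkX, hXk⟩ := exists_le_lt_succ_of_tendsto_atTop hP.tendsto_polyHeight hX
  obtain ⟨hk, hk1, hck⟩ := hN k hNk
  have hX1 : (1 : ℝ) ≤ X := by
    have := one_le_polyHeight (hP.ne_zero k hk)
    exact (show (1 : ℝ) ≤ polyHeight (P k) by exact_mod_cast this).trans hkX
  exact ⟨P k, hP.deg_le k hk, hkX, hP.abs_aeval_pos hξ hk, lt_rpow_neg_of_le hX1 hXk.le hk1 hck⟩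

lemma frequently_le_vk (hP : IsBestApproxSeq n ξ P) (hn : 1 ≤ n)
    (hξ : ¬ ∃ Q : ℤ[X], Q ≠ 0 ∧ Q.natDegree ≤ n ∧ aeval ξ Q = 0) {w : ℝ}
    (hw : w ∈ ordExpSet n ξ) : ∃ᶠ k in atTop, w ≤ vk ξ P k := by
  rw [frequently_atTop]
  intro N₀
  obtain ⟨N, hN⟩ := eventually_atTop.1
    ((eventually_ge_atTop (max N₀ 2)).and (hP.eventually_abs_aeval_lt_one hn))
  obtain ⟨Q, ⟨hQn, hQ0, hQw⟩, hQN⟩ :=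
    (hw.sdiff (finite_setOf_natDegree_le_polyHeight_le n (polyHeight (P N)))).nonempty
  have hNQ : polyHeight (P N) ≤ polyHeight Q := (not_le.1 fun h => hQN ⟨hQn, h⟩).le
  obtain ⟨k, hNk, hkQ, hQk⟩ := exists_le_lt_succ_of_tendsto_atTop hP.tendsto_polyHeight
    (x := polyHeight Q) (by exact_mod_cast hNQ)
  obtain ⟨hk, hk1⟩ := hN k hNk
  refine ⟨k, le_of_max_le_left hk, ?_⟩
  have hk2 : 2 ≤ k := le_of_max_le_right hk
  have hH := hP.one_lt_polyHeight hk2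
  rw [vk, le_neg_log_div_log_iff (hP.abs_aeval_pos hξ (by omega)) hH]
  have hAQ := hP.abs_aeval_le_of_polyHeight_lt (k := k) (by omega) (by rintro rfl; simp at hQ0) hQn
    (by exact_mod_cast hQk)
  exact (lt_rpow_neg_of_le hH.le hkQ hk1 (hAQ.trans_lt hQw)).le

lemma mem_ordExpSet_of_frequently_lt_vk (hP : IsBestApproxSeq n ξ P)
    (hξ : ¬ ∃ Q : ℤ[X], Q ≠ 0 ∧ Q.natDegree ≤ n ∧ aeval ξ Q = 0) {c : ℝ}
    (hc : ∃ᶠ k in atTop, c < vk ξ P k) : c ∈ ordExpSet n ξ := by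
  have hinf : {k | 2 ≤ k ∧ c < vk ξ P k}.Infinite := Nat.frequently_atTop_iff_infinite.1
    ((hc.and_eventually (eventually_ge_atTop 2)).mono fun _ h => ⟨h.2, h.1⟩)
  have hinj : Set.InjOn P {k | 2 ≤ k ∧ c < vk ξ P k} :=
    (Set.InjOn.of_comp (g := polyHeight) hP.strictMonoOn_polyHeight.injOn).mono fun k hk =>
      Set.mem_Ici.2 (by have := hk.1; omega)
  refine (hinf.image hinj).mono ?_
  rintro _ ⟨k, ⟨hk, hck⟩, rfl⟩
  rw [vk, lt_neg_log_div_log_iff (hP.abs_aeval_pos hξ (by omega)) (hP.one_lt_polyHeight hk)]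
    at hck
  exact ⟨hP.deg_le k (by omega), hP.abs_aeval_pos hξ (by omega), hck⟩

end IsBestApproxSeq

/-- `ŵ_n(ξ) = liminf μ_k` and `w_n(ξ) = limsup v_k` (in the extended
reals). -/
theorem stmt19 (n : ℕ) (hn : 1 ≤ n) (ξ : ℝ)
    (hξ : ¬ ∃ Q : Polynomial ℤ, Q ≠ 0 ∧ Q.natDegree ≤ n ∧ Polynomial.aeval ξ Q = 0)
    (P : ℕ → Polynomial ℤ) (hP : IsBestApproxSeq n ξ P) :
    wHat n ξ = Filter.liminf (fun k => ((muk ξ P k : ℝ) : EReal)) Filter.atTop ∧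
    wOrd n ξ = Filter.limsup (fun k => ((vk ξ P k : ℝ) : EReal)) Filter.atTop :=
  ⟨EReal.sSup_coe_image_eq_liminf (fun _ hw => hP.eventually_le_muk hξ hw)
      (fun _ hc => hP.mem_uniformExpSet_of_eventually_lt_muk hn hξ hc),
    EReal.sSup_coe_image_eq_limsup (fun _ hw => hP.frequently_le_vk hn hξ hw)
      (fun _ hc => hP.mem_ordExpSet_of_frequently_lt_vk hξ hc)⟩
end
end
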